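/- arXiv:1905.04383 — 10 statements merged into one kernel-verified Lean document; each statement's English description precedes it below -/
import Mathlib

section
/- Let κ be a field, let p : Fin n → ℝ≥0 and q : Fin m → ℝ≥0 be degree vectors, and let A be a (q,p)-admissible m×n matrix over κ[ℝ₊]. Then there exist an invertible m×m matrix B over κ[ℝ₊] that is (q,q)-admissible and an invertible n×n matrix C over κ[ℝ₊] that is (p,p)-admissible such that the product B * A * C has at most one nonzero entry in each row and at most one nonzero entry in each column. -/
open scoped NNReal

noncomputable section

/-- The ring `κ[ℝ₊]` of polynomials with coefficients in `κ` and exponents in `ℝ≥0`,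
realized as the monoid algebra of the additive monoid `ℝ≥0` over `κ`. -/
abbrev PersRing (κ : Type) [Field κ] : Type := AddMonoidAlgebra κ ℝ≥0

/-- An `m × n` matrix over `κ[ℝ₊]` is `(q, p)`-admissible if every entry `A i j` is either `0`
or a nonzero scalar multiple of the monomial `T ^ (p j - q i)` with `q i ≤ p j`.  These are
exactly the matrices of `ℝ₊`-graded homomorphisms between graded free finitely generated
`κ[ℝ₊]`-modules with homogeneous bases of degrees `p` and `q`. -/
def IsAdmissible {κ : Type} [Field κ] {m n : ℕ} (q : Fin m → ℝ≥0) (p : Fin n → ℝ≥0)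
    (A : Matrix (Fin m) (Fin n) (PersRing κ)) : Prop :=
  ∀ i j, A i j = 0 ∨ (q i ≤ p j ∧ ∃ c : κ, c ≠ 0 ∧
    A i j = c • AddMonoidAlgebra.single (p j - q i) (1 : κ))

/-!
Writing the entries of an admissible matrix as `A i j = c i j • T ^ (p j - q i)`, products of
admissible matrices correspond to products of their scalar coefficient matrices, so it suffices
to bring a scalar matrix `c` with `c i j ≠ 0 → q i ≤ p j` into normal form by invertible scalar
matrices of the same kind whose inverses are of that kind too. This is Gaussian elimination
with a careful choice of pivot: among the nonzero entries that are not alone in their row and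
column, take one of least column degree `p j₀` and then of greatest row degree `q i₀`. With this
choice the row operations clearing column `j₀` and the column operations clearing row `i₀` are
compatible with the degrees, and entries that were already alone in their row and column are
left untouched, so the number of such entries grows at each step.
-/

namespace Matrix

variable {α ι η ζ R K : Type*}

def DegreeCompatible [LE α] [Zero R] (q : ι → α) (p : η → α) (a : Matrix ι η R) : Prop :=
  ∀ i j, a i j ≠ 0 → q i ≤ p j

section Preorder

variable [Preorder α]

theorem degreeCompatible_one [Semiring R] [DecidableEq ι] (q : ι → α) :
    DegreeCompatible q q (1 : Matrix ι ι R) :=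
  fun _ _ h => (of_not_not fun hij => h (one_apply_ne hij)) ▸ le_rfl

theorem DegreeCompatible.mul [Semiring R] [Fintype ι] {q : ζ → α} {r : ι → α} {p : η → α}
    {a : Matrix ζ ι R} {b : Matrix ι η R} (ha : DegreeCompatible q r a)
    (hb : DegreeCompatible r p b) : DegreeCompatible q p (a * b) := fun i j h => by
  obtain ⟨k, -, hk⟩ := Finset.exists_ne_zero_of_sum_ne_zero h
  exact (ha i k (left_ne_zero_of_mul hk)).trans (hb k j (right_ne_zero_of_mul hk))

theorem DegreeCompatible.add [AddZeroClass R] {q : ζ → α} {p : η → α} {a b : Matrix ζ η R}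
    (ha : DegreeCompatible q p a) (hb : DegreeCompatible q p b) :
    DegreeCompatible q p (a + b) := fun i j h => by
  by_cases hij : a i j = 0
  · exact hb i j (by simpa [hij] using h)
  · exact ha i j hij

theorem DegreeCompatible.neg [SubtractionMonoid R] {q : ζ → α} {p : η → α} {a : Matrix ζ η R}
    (ha : DegreeCompatible q p a) : DegreeCompatible q p (-a) :=
  fun i j h => ha i j (neg_ne_zero.1 h)

variable [Fintype ι] [DecidableEq ι]

variable (R) in
def degreeUnits [Ring R] (q : ι → α) : Subgroup (Matrix ι ι R)ˣ where
  carrier := {u | DegreeCompatible q q (u : Matrix ι ι R) ∧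
    DegreeCompatible q q (↑u⁻¹ : Matrix ι ι R)}
  mul_mem' hu hv := ⟨hu.1.mul hv.1, by rw [_root_.mul_inv_rev, Units.val_mul]; exact hv.2.mul hu.2⟩
  one_mem' := ⟨by simpa using degreeCompatible_one q, by simpa using degreeCompatible_one q⟩
  inv_mem' hu := ⟨hu.2, by simpa using hu.1⟩

theorem exists_mem_degreeUnits_val_eq_one_add [Ring R] {q : ι → α} {N : Matrix ι ι R}
    (hN : DegreeCompatible q q N) (hN2 : N * N = 0) :
    ∃ u ∈ degreeUnits R q, (u : Matrix ι ι R) = 1 + N :=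
  ⟨⟨1 + N, 1 + -N, by noncomm_ring [hN2], by noncomm_ring [hN2]⟩,
    ⟨(degreeCompatible_one q).add hN, (degreeCompatible_one q).add hN.neg⟩, rfl⟩

end Preorder

section Isolated

variable [Zero R]

def IsIsolated (a : Matrix ι η R) (i : ι) (j : η) : Prop :=
  a i j ≠ 0 ∧ (∀ j', a i j' ≠ 0 → j' = j) ∧ ∀ i', a i' j ≠ 0 → i' = i

def IsPartialMonomial (a : Matrix ι η R) : Prop :=
  (∀ i j₁ j₂, a i j₁ ≠ 0 → a i j₂ ≠ 0 → j₁ = j₂) ∧ ∀ i₁ i₂ j, a i₁ j ≠ 0 → a i₂ j ≠ 0 → i₁ = i₂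

theorem isPartialMonomial_of_forall_isIsolated {a : Matrix ι η R}
    (h : ∀ i j, a i j ≠ 0 → IsIsolated a i j) : IsPartialMonomial a :=
  ⟨fun i j₁ j₂ h₁ h₂ => ((h i j₁ h₁).2.1 j₂ h₂).symm,
    fun i₁ i₂ j h₁ h₂ => ((h i₁ j h₁).2.2 i₂ h₂).symm⟩

theorem exists_pivot [LinearOrder α] [Finite ι] [Finite η] {q : ι → α} {p : η → α}
    {a : Matrix ι η R} (h : ∃ i j, a i j ≠ 0 ∧ ¬IsIsolated a i j) :
    ∃ i₀ j₀, a i₀ j₀ ≠ 0 ∧ ¬IsIsolated a i₀ j₀ ∧ (∀ j, a i₀ j ≠ 0 → p j₀ ≤ p j) ∧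
      ∀ i, a i j₀ ≠ 0 → q i ≤ q i₀ := by
  obtain ⟨⟨i₀, j₀⟩, ⟨h₀, hiso⟩, hmin⟩ :=
    Set.exists_min_image {x : ι × η | a x.1 x.2 ≠ 0 ∧ ¬IsIsolated a x.1 x.2}
      (fun x => toLex (p x.2, OrderDual.toDual (q x.1))) (Set.toFinite _)
      (let ⟨i, j, hij⟩ := h; ⟨(i, j), hij⟩)
  refine ⟨i₀, j₀, h₀, hiso, fun j hj => ?_, fun i hi => ?_⟩
  · obtain rfl | hne := eq_or_ne j j₀
    · exact le_rfl
    have := hmin (i₀, j) ⟨hj, fun hiso' => hne (hiso'.2.1 j₀ h₀).symm⟩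
    rcases Prod.Lex.toLex_le_toLex.1 this with hlt | ⟨heq, -⟩
    · exact hlt.le
    · exact heq.le
  · obtain rfl | hne := eq_or_ne i i₀
    · exact le_rfl
    have := hmin (i, j₀) ⟨hi, fun hiso' => hne (hiso'.2.2 i₀ h₀).symm⟩
    rcases Prod.Lex.toLex_le_toLex.1 this with hlt | ⟨-, hle⟩
    · exact absurd hlt (lt_irrefl _)
    · exact OrderDual.toDual_le_toDual.1 hle

end Isolated

section Elimination

variable [Field K] [DecidableEq ι] [DecidableEq η]

def eliminate (a : Matrix ι η K) (i₀ : ι) (j₀ : η) : Matrix ι η K :=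
  of fun i j => if i = i₀ ∨ j = j₀ then (if i = i₀ ∧ j = j₀ then a i j else 0)
    else a i j - a i j₀ * a i₀ j / a i₀ j₀

theorem isIsolated_eliminate {a : Matrix ι η K} {i₀ : ι} {j₀ : η} (h₀ : a i₀ j₀ ≠ 0) :
    IsIsolated (eliminate a i₀ j₀) i₀ j₀ := by
  refine ⟨by simpa [eliminate] using h₀, fun j hj => ?_, fun i hi => ?_⟩
  · by_contra hne
    simp [eliminate, hne] at hj
  · by_contra hne
    simp [eliminate, hne] at hi

theorem IsIsolated.eliminate {a : Matrix ι η K} {i₀ i : ι} {j₀ j : η} (h : IsIsolated a i j)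
    (h₀ : a i₀ j₀ ≠ 0) (hpiv : ¬IsIsolated a i₀ j₀) : IsIsolated (eliminate a i₀ j₀) i j := by
  have hi : i ≠ i₀ := by
    rintro rfl
    obtain rfl := h.2.1 j₀ h₀
    exact hpiv h
  have hj : j ≠ j₀ := by
    rintro rfl
    obtain rfl := h.2.2 i₀ h₀
    exact hpiv h
  have hij₀ : a i j₀ = 0 := by_contra fun h' => hj (h.2.1 j₀ h').symm
  have hi₀j : a i₀ j = 0 := by_contra fun h' => hi (h.2.2 i₀ h').symm
  refine ⟨by simpa [Matrix.eliminate, hi, hj, hij₀] using h.1, fun j' hj' => ?_, fun i' hi' => ?_⟩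
  · by_cases hj'₀ : j' = j₀
    · simp [Matrix.eliminate, hi, hj'₀] at hj'
    · exact h.2.1 j' (by simpa [Matrix.eliminate, hi, hj'₀, hij₀] using hj')
  · by_cases hi'₀ : i' = i₀
    · simp [Matrix.eliminate, hj, hi'₀] at hi'
    · exact h.2.2 i' (by simpa [Matrix.eliminate, hj, hi'₀, hi₀j] using hi')

variable [Fintype ι] [Fintype η]

theorem exists_mul_mul_eq_eliminate [Preorder α] {q : ι → α} {p : η → α} {a : Matrix ι η K}
    {i₀ : ι} {j₀ : η} (h₀ : a i₀ j₀ ≠ 0) (hrow : ∀ j, a i₀ j ≠ 0 → p j₀ ≤ p j)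
    (hcol : ∀ i, a i j₀ ≠ 0 → q i ≤ q i₀) :
    ∃ b ∈ degreeUnits K q, ∃ c ∈ degreeUnits K p,
      (b : Matrix ι ι K) * a * (c : Matrix η η K) = eliminate a i₀ j₀ := by
  set N : Matrix ι ι K := of fun i k => if k = i₀ ∧ i ≠ i₀ then -(a i j₀ / a i₀ j₀) else 0
  set N' : Matrix η η K := of fun l j => if l = j₀ ∧ j ≠ j₀ then -(a i₀ j / a i₀ j₀) else 0
  have hN : DegreeCompatible q q N := fun i k h => by
    simp only [N, of_apply, ne_eq, ite_eq_right_iff, neg_eq_zero, div_eq_zero_iff, h₀, or_false,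
      Classical.not_imp] at h
    exact h.1.1 ▸ hcol i h.2
  have hN' : DegreeCompatible p p N' := fun l j h => by
    simp only [N', of_apply, ne_eq, ite_eq_right_iff, neg_eq_zero, div_eq_zero_iff, h₀, or_false,
      Classical.not_imp] at h
    exact h.1.1 ▸ hrow j h.2
  have hN2 : N * N = 0 := by ext; exact Finset.sum_eq_zero fun _ _ => by aesop
  have hN'2 : N' * N' = 0 := by ext; exact Finset.sum_eq_zero fun _ _ => by aesop
  obtain ⟨b, hb, hbN⟩ := exists_mem_degreeUnits_val_eq_one_add hN hN2
  obtain ⟨c, hc, hcN'⟩ := exists_mem_degreeUnits_val_eq_one_add hN' hN'2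
  refine ⟨b, hb, c, hc, ?_⟩
  rw [hbN, hcN']
  ext i j
  simp only [Matrix.add_mul, Matrix.mul_add, Matrix.one_mul, Matrix.mul_one]
  simp only [N, N', eliminate, add_apply, mul_apply, of_apply]
  by_cases hi : i = i₀ <;> by_cases hj : j = j₀ <;> simp [hi, hj, Finset.sum_ite_eq', h₀] <;>
    field_simp <;> ring

theorem exists_isPartialMonomial_mul_mul [LinearOrder α] {q : ι → α} {p : η → α}
    {a : Matrix ι η K} (ha : DegreeCompatible q p a) :
    ∃ b ∈ degreeUnits K q, ∃ c ∈ degreeUnits K p,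
      IsPartialMonomial ((b : Matrix ι ι K) * a * (c : Matrix η η K)) := by
  induction hk : {x : ι × η | ¬IsIsolated a x.1 x.2}.ncard using Nat.strong_induction_on
    generalizing a with
  | _ k ih =>
  by_cases hdone : ∀ i j, a i j ≠ 0 → IsIsolated a i j
  · refine ⟨1, one_mem _, 1, one_mem _, ?_⟩
    simpa using isPartialMonomial_of_forall_isIsolated hdone
  push Not at hdone
  obtain ⟨i₀, j₀, h₀, hpiv, hrow, hcol⟩ := exists_pivot (q := q) (p := p) hdone
  obtain ⟨b, hb, c, hc, hbac⟩ := exists_mul_mul_eq_eliminate h₀ hrow hcol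
  have hsub : {x : ι × η | ¬IsIsolated (eliminate a i₀ j₀) x.1 x.2} ⊂
      {x : ι × η | ¬IsIsolated a x.1 x.2} :=
    (Set.ssubset_iff_of_subset <| Set.ofPred_subset_ofPred.2 fun _ hx hiso =>
      hx (hiso.eliminate h₀ hpiv)).2
      ⟨(i₀, j₀), hpiv, not_not.2 (isIsolated_eliminate h₀)⟩
  obtain ⟨b', hb', c', hc', hmono⟩ :=
    ih _ (hk ▸ Set.ncard_lt_ncard hsub) (hbac ▸ (hb.1.mul ha).mul hc.1) rfl
  refine ⟨b' * b, mul_mem hb' hb, c * c', mul_mem hc hc', ?_⟩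
  convert hmono using 1
  rw [← hbac]
  simp only [Units.val_mul, Matrix.mul_assoc]

end Elimination

end Matrix

open Matrix
open AddMonoidAlgebra (single single_ne_zero single_mul_single singleAddHom)

section Graded

variable {κ : Type} [Field κ] {ι η ζ : Type*}

def gradedMatrix (q : ι → ℝ≥0) (p : η → ℝ≥0) (a : Matrix ι η κ) : Matrix ι η (PersRing κ) :=
  of fun i j => single (p j - q i) (a i j)

theorem gradedMatrix_apply_ne_zero {q : ι → ℝ≥0} {p : η → ℝ≥0} {a : Matrix ι η κ} {i : ι}
    {j : η} :
    gradedMatrix q p a i j ≠ 0 ↔ a i j ≠ 0 :=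
  single_ne_zero

theorem single_tsub_mul_single_tsub {r s t : ℝ≥0} (hrs : r ≤ s) (hst : s ≤ t) (x y : κ) :
    (single (s - r) x : PersRing κ) * single (t - s) y = single (t - r) (x * y) := by
  rw [single_mul_single, add_comm, tsub_add_tsub_cancel hst hrs]

theorem gradedMatrix_mul [Fintype ι] {q : ζ → ℝ≥0} {r : ι → ℝ≥0} {p : η → ℝ≥0}
    {a : Matrix ζ ι κ} {b : Matrix ι η κ} (ha : DegreeCompatible q r a)
    (hb : DegreeCompatible r p b) :
    gradedMatrix q r a * gradedMatrix r p b = gradedMatrix q p (a * b) := by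
  refine Matrix.ext fun i j => ?_
  have hterm : ∀ k, (single (r k - q i) (a i k) : PersRing κ) * single (p j - r k) (b k j) =
      single (p j - q i) (a i k * b k j) := fun k => by
    by_cases hk : a i k * b k j = 0
    · rcases mul_eq_zero.1 hk with h | h <;> simp [h]
    · exact single_tsub_mul_single_tsub (ha i k (left_ne_zero_of_mul hk))
        (hb k j (right_ne_zero_of_mul hk)) _ _
  simp only [gradedMatrix, mul_apply, of_apply, hterm]
  exact (map_sum (singleAddHom (p j - q i)) _ _).symm

theorem gradedMatrix_one [DecidableEq ι] (q : ι → ℝ≥0) :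
    gradedMatrix q q (1 : Matrix ι ι κ) = 1 := by
  refine Matrix.ext fun i j => ?_
  by_cases h : i = j
  · subst h
    simp only [gradedMatrix, of_apply, tsub_self, one_apply_eq]
    rfl
  · simp [gradedMatrix, h]

theorem isUnit_gradedMatrix [Fintype ι] [DecidableEq ι] {q : ι → ℝ≥0} {u : (Matrix ι ι κ)ˣ}
    (hu : u ∈ degreeUnits κ q) : IsUnit (gradedMatrix q q (u : Matrix ι ι κ)) :=
  ⟨⟨gradedMatrix q q ↑u, gradedMatrix q q ↑u⁻¹,
    by rw [gradedMatrix_mul hu.1 hu.2, u.mul_inv, gradedMatrix_one],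
    by rw [gradedMatrix_mul hu.2 hu.1, u.inv_mul, gradedMatrix_one]⟩, rfl⟩

end Graded

section Admissible

variable {κ : Type} [Field κ] {m n : ℕ} {q : Fin m → ℝ≥0} {p : Fin n → ℝ≥0}

theorem isAdmissible_gradedMatrix {a : Matrix (Fin m) (Fin n) κ} (ha : DegreeCompatible q p a) :
    IsAdmissible q p (gradedMatrix q p a) := fun i j => by
  by_cases h : a i j = 0
  · exact Or.inl (by simp [gradedMatrix, h])
  · exact Or.inr ⟨ha i j h, a i j, h, by simp [gradedMatrix]⟩

theorem IsAdmissible.exists_eq_gradedMatrix {A : Matrix (Fin m) (Fin n) (PersRing κ)}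
    (hA : IsAdmissible q p A) : ∃ a, DegreeCompatible q p a ∧ gradedMatrix q p a = A := by
  have hcoeff : ∀ i j, single (p j - q i) ((A i j).coeff (p j - q i)) = A i j := fun i j => by
    rcases hA i j with h | ⟨-, c, -, h⟩ <;> simp [h]
  refine ⟨of fun i j => (A i j).coeff (p j - q i), fun i j h => ?_, ext fun i j => hcoeff i j⟩
  rcases hA i j with h' | ⟨hle, -⟩
  · simp [h'] at h
  · exact hle

end Admissible

/-- **Lemma 2.5 (normal form of a graded homomorphism).**  Any `(q, p)`-admissible matrix
over `κ[ℝ₊]` can be brought, by an invertible `(q, q)`-admissible row operation matrix `B`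
and an invertible `(p, p)`-admissible column operation matrix `C`, to a matrix `B * A * C`
having at most one nonzero entry in each row and in each column. -/
theorem admissible_matrix_normal_form (κ : Type) [Field κ] {m n : ℕ}
    (p : Fin n → ℝ≥0) (q : Fin m → ℝ≥0)
    (A : Matrix (Fin m) (Fin n) (PersRing κ)) (hA : IsAdmissible q p A) :
    ∃ (B : Matrix (Fin m) (Fin m) (PersRing κ)) (C : Matrix (Fin n) (Fin n) (PersRing κ)),
      IsUnit B ∧ IsUnit C ∧ IsAdmissible q q B ∧ IsAdmissible p p C ∧
      (∀ i j₁ j₂, (B * A * C) i j₁ ≠ 0 → (B * A * C) i j₂ ≠ 0 → j₁ = j₂) ∧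
      (∀ i₁ i₂ j, (B * A * C) i₁ j ≠ 0 → (B * A * C) i₂ j ≠ 0 → i₁ = i₂) := by
  obtain ⟨a, ha, rfl⟩ := hA.exists_eq_gradedMatrix
  obtain ⟨b, hb, c, hc, hrow, hcol⟩ := exists_isPartialMonomial_mul_mul ha
  refine ⟨gradedMatrix q q b, gradedMatrix p p c, isUnit_gradedMatrix hb, isUnit_gradedMatrix hc,
    isAdmissible_gradedMatrix hb.1, isAdmissible_gradedMatrix hc.1, ?_⟩
  rw [gradedMatrix_mul hb.1 ha, gradedMatrix_mul (hb.1.mul ha) hc.1]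
  simp only [gradedMatrix_apply_ne_zero]
  exact ⟨hrow, hcol⟩

end
end

section
/- Let κ be a field, let p : Fin n → ℝ≥0 and q : Fin m → ℝ≥0 be degree vectors, let A be a (q,p)-admissible m×n matrix over κ[ℝ₊], and let φ : (Fin n → κ[ℝ₊]) → (Fin m → κ[ℝ₊]) be the κ[ℝ₊]-linear map given by multiplication by A (i.e. A.mulVecLin). Then the kernel of φ is a free and finitely generated κ[ℝ₊]-module. -/
open scoped NNReal

noncomputable section

/-!
Gaussian elimination with graded pivots. Admissibility says that `A i j` is supported in the
degrees `d` with `q i + d = p j`, i.e. `A i j ∈ gradeBy κ (q i + ·) (p j)`; in this form no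
truncated subtraction occurs and the argument works over any cancellative, canonically linearly
ordered monoid of degrees. In the last row, the nonzero entry whose column has least degree
`p j` divides every other entry of the row by a homogeneous quotient of the right degree, so an
invertible column operation clears the rest of the row and keeps the matrix admissible. The
pivot is a monomial, hence a non-zero-divisor, so the kernel is then that of the matrix with
the last row and the pivot column deleted, and induction on the number of rows ends with the
zero map.
-/

open AddMonoidAlgebra
open scoped nonZeroDivisors

section

variable {k G : Type*} [CommSemiring k]

theorem AddMonoidAlgebra.mul_mem_gradeBy_add_left [AddSemigroup G] {a b c : G} {x y : k[G]}
    (hx : x ∈ gradeBy k (a + ·) b) (hy : y ∈ gradeBy k (b + ·) c) :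
    x * y ∈ gradeBy k (a + ·) c := by
  classical
  intro d hd
  obtain ⟨d₁, hd₁, d₂, hd₂, rfl⟩ := Finset.mem_add.mp (support_coeff_mul_subset x y hd)
  simp only [← add_assoc, hx d₁ hd₁, hy d₂ hd₂]

theorem AddMonoidAlgebra.eq_single_of_mem_gradeBy_add_left [Add G] [IsLeftCancelAdd G]
    {a b d : G} {x : k[G]} (hx : x ∈ gradeBy k (a + ·) b) (hd : a + d = b) :
    x = single d (x.coeff d) := by
  classical
  ext d'
  rw [coeff_single, Finsupp.single_apply]
  split_ifs with h
  · rw [h]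
  · exact Finsupp.notMem_support_iff.mp fun hd' =>
      h (add_left_cancel (hd.trans (hx d' hd').symm))

end

section

variable {k G : Type*} [Field k] [AddCancelCommMonoid G]

theorem AddMonoidAlgebra.exists_eq_single_of_mem_gradeBy_add_left {a b : G} {x : k[G]}
    (hx : x ∈ gradeBy k (a + ·) b) (hx0 : x ≠ 0) :
    ∃ d c, a + d = b ∧ c ≠ 0 ∧ x = single d c := by
  obtain ⟨d, hd⟩ := Finsupp.support_nonempty_iff.mpr (coeff_eq_zero.not.mpr hx0)
  exact ⟨d, x.coeff d, hx d hd, Finsupp.mem_support_iff.mp hd,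
    eq_single_of_mem_gradeBy_add_left hx (hx d hd)⟩

theorem AddMonoidAlgebra.mem_nonZeroDivisors_of_mem_gradeBy_add_left {a b : G} {x : k[G]}
    (hx : x ∈ gradeBy k (a + ·) b) (hx0 : x ≠ 0) : x ∈ k[G]⁰ := by
  obtain ⟨d, c, -, hc, rfl⟩ := exists_eq_single_of_mem_gradeBy_add_left hx hx0
  refine mem_nonZeroDivisors_iff_right.mpr fun f hf => ?_
  have hsupp := support_coeff_mul_single f c (fun y => mul_eq_zero_iff_right hc) d
  rw [hf, coeff_zero, Finsupp.support_zero, eq_comm, Finset.map_eq_empty,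
    Finsupp.support_eq_empty, coeff_eq_zero] at hsupp
  exact hsupp

theorem AddMonoidAlgebra.exists_mem_gradeBy_mul_eq [LE G] [CanonicallyOrderedAdd G]
    {a b c : G} {x y : k[G]} (hx : x ∈ gradeBy k (a + ·) b) (hx0 : x ≠ 0)
    (hy : y ∈ gradeBy k (a + ·) c) (hbc : b ≤ c) :
    ∃ r ∈ gradeBy k (b + ·) c, x * r = y := by
  obtain ⟨d, cx, rfl, hcx, rfl⟩ := exists_eq_single_of_mem_gradeBy_add_left hx hx0
  obtain ⟨e, rfl⟩ := le_iff_exists_add.mp hbc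
  refine ⟨single e (y.coeff (d + e) / cx), single_mem_gradeBy _ _ _, ?_⟩
  rw [single_mul_single, mul_div_cancel₀ _ hcx,
    ← eq_single_of_mem_gradeBy_add_left hy (add_assoc a d e).symm]

end

namespace Matrix

variable {R : Type*}

theorem ker_mulVecLin_eq_of_last_row_eq_zero [CommSemiring R] {m : ℕ} {n : Type*} [Fintype n]
    {A : Matrix (Fin (m + 1)) n R} (h : ∀ j, A (Fin.last m) j = 0) :
    LinearMap.ker A.mulVecLin = LinearMap.ker (A.submatrix Fin.castSucc id).mulVecLin := by
  ext x
  have hlast : (A *ᵥ x) (Fin.last m) = 0 := by simp [mulVec, dotProduct, h]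
  simp only [LinearMap.mem_ker, mulVecLin_apply, funext_iff, Fin.forall_fin_succ', hlast,
    Pi.zero_apply, and_true]
  rfl

theorem mul_one_sub_vecMulVec_single_apply [CommRing R] {l n : Type*} [Fintype n] [DecidableEq n]
    (A : Matrix l n R) (j : n) (r : n → R) (i : l) (j' : n) :
    (A * ((1 : Matrix n n R) - vecMulVec (Pi.single j 1) r)) i j' = A i j' - A i j * r j' := by
  rw [Matrix.mul_sub, Matrix.mul_one, mul_vecMulVec, Matrix.sub_apply, vecMulVec_apply,
    mulVec_single_one]
  rfl

theorem isUnit_one_sub_vecMulVec_single [CommRing R] {n : Type*} [Fintype n] [DecidableEq n]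
    {j : n} {r : n → R} (hr : r j = 0) :
    IsUnit ((1 : Matrix n n R) - vecMulVec (Pi.single j 1) r) :=
  IsNilpotent.isUnit_one_sub ⟨2, by
    rw [pow_two, vecMulVec_mul_vecMulVec, dotProduct_single_one, hr, zero_smul, vecMulVec_zero]⟩

def kerMulVecLinMulEquiv [CommRing R] {l n : Type*} [Fintype n] [DecidableEq n]
    (A : Matrix l n R) {M : Matrix n n R} (hM : IsUnit M) :
    LinearMap.ker (A * M).mulVecLin ≃ₗ[R] LinearMap.ker A.mulVecLin :=
  (LinearEquiv.ofEq _ _ (by rw [← toLin'_apply', toLin'_mul, LinearMap.ker_comp]; rfl)).trans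
    (LinearEquiv.ofSubmodule' (M.toLinearEquiv' hM.invertible) _)

variable [CommSemiring R] {m n : ℕ} {A : Matrix (Fin (m + 1)) (Fin (n + 1)) R}
  {j : Fin (n + 1)}

theorem mem_ker_mulVecLin_iff_of_pivot (hpiv : A (Fin.last m) j ∈ R⁰)
    (hrow : ∀ j' ≠ j, A (Fin.last m) j' = 0) {x : Fin (n + 1) → R} :
    x ∈ LinearMap.ker A.mulVecLin ↔
      x j = 0 ∧ j.removeNth x ∈ LinearMap.ker (A.submatrix Fin.castSucc j.succAbove).mulVecLin := by
  have hsplit (i) : (A *ᵥ x) i = A i j * x j + (A.submatrix id j.succAbove *ᵥ j.removeNth x) i :=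
    Fin.sum_univ_succAbove _ j
  have hlast : (A *ᵥ x) (Fin.last m) = x j * A (Fin.last m) j := by
    rw [hsplit, mul_comm]
    simp [mulVec, dotProduct, hrow _ (Fin.succAbove_ne j _)]
  simp only [LinearMap.mem_ker, mulVecLin_apply, funext_iff, Fin.forall_fin_succ', hlast,
    Pi.zero_apply, mul_right_mem_nonZeroDivisors_eq_zero_iff hpiv]
  constructor
  · rintro ⟨h, hj⟩
    refine ⟨hj, fun i => ?_⟩
    simp only [hsplit, hj, mul_zero, zero_add] at h
    exact h i
  · rintro ⟨hj, h⟩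
    refine ⟨fun i => ?_, hj⟩
    rw [hsplit, hj, mul_zero, zero_add]
    exact h i

def kerMulVecLinEquivOfPivot (hpiv : A (Fin.last m) j ∈ R⁰)
    (hrow : ∀ j' ≠ j, A (Fin.last m) j' = 0) :
    LinearMap.ker A.mulVecLin ≃ₗ[R]
      LinearMap.ker (A.submatrix Fin.castSucc j.succAbove).mulVecLin :=
  have hmem := fun {x} => mem_ker_mulVecLin_iff_of_pivot (x := x) hpiv hrow
  have heq (x : LinearMap.ker A.mulVecLin) : x.1 = j.insertNth 0 (j.removeNth x.1) :=
    Fin.eq_insertNth_iff.mpr ⟨(hmem.mp x.2).1, rfl⟩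
  LinearEquiv.ofBijective
    ((LinearMap.funLeft R R j.succAbove).restrict fun x hx => (hmem.mp hx).2)
    ⟨fun x y hxy => Subtype.ext <| by
        rw [heq x, heq y]
        exact congrArg (j.insertNth 0) (congrArg Subtype.val hxy),
      fun y => ⟨⟨j.insertNth 0 y.1, hmem.mpr ⟨Fin.insertNth_apply_same _ _ _, by
        rw [Fin.removeNth_insertNth]; exact y.2⟩⟩,
        Subtype.ext (Fin.removeNth_insertNth (α := fun _ => R) j 0 y.1)⟩⟩

end Matrix

section

variable {k G : Type*} [Field k] [AddCancelCommMonoid G] [LinearOrder G] [CanonicallyOrderedAdd G]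

theorem AddMonoidAlgebra.exists_mul_eq_of_pivot {ι : Type*} {a : G} {p : ι → G} {v : ι → k[G]}
    (hv : ∀ j, v j ∈ gradeBy k (a + ·) (p j)) {j : ι} (hj : v j ≠ 0)
    (hmin : ∀ j', v j' ≠ 0 → p j ≤ p j') :
    ∃ r : ι → k[G], r j = 0 ∧ (∀ j', r j' ∈ gradeBy k (p j + ·) (p j')) ∧
      ∀ j' ≠ j, v j * r j' = v j' := by
  have (j' : ι) : ∃ ρ ∈ gradeBy k (p j + ·) (p j'),
      (j' = j → ρ = 0) ∧ (j' ≠ j → v j * ρ = v j') := by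
    by_cases hj' : j' = j
    · exact ⟨0, zero_mem _, fun _ => rfl, fun h => absurd hj' h⟩
    by_cases h0 : v j' = 0
    · exact ⟨0, zero_mem _, fun h => absurd h hj', fun _ => by rw [mul_zero, h0]⟩
    obtain ⟨ρ, hρ, hmul⟩ := exists_mem_gradeBy_mul_eq (hv j) hj (hv j') (hmin j' h0)
    exact ⟨ρ, hρ, fun h => absurd h hj', fun _ => hmul⟩
  choose r hr hrj hclear using this
  exact ⟨r, hrj j rfl, hr, hclear⟩

namespace Matrix

theorem exists_isUnit_clearing_last_row {m n : ℕ} {p : Fin (n + 1) → G} {q : Fin (m + 1) → G}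
    {A : Matrix (Fin (m + 1)) (Fin (n + 1)) k[G]} (hA : ∀ i j, A i j ∈ gradeBy k (q i + ·) (p j))
    (hrow : ∃ j, A (Fin.last m) j ≠ 0) :
    ∃ (j : Fin (n + 1)) (M : Matrix (Fin (n + 1)) (Fin (n + 1)) k[G]), IsUnit M ∧
      (∀ i j', (A * M) i j' ∈ gradeBy k (q i + ·) (p j')) ∧
      (A * M) (Fin.last m) j ≠ 0 ∧ ∀ j' ≠ j, (A * M) (Fin.last m) j' = 0 := by
  classical
  obtain ⟨j, hj, hmin⟩ := Finset.exists_min_image {j | A (Fin.last m) j ≠ 0} p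
    (by simpa [Finset.Nonempty] using hrow)
  simp only [Finset.mem_filter, Finset.mem_univ, true_and] at hj hmin
  obtain ⟨r, hrj, hr, hclear⟩ := exists_mul_eq_of_pivot (hA (Fin.last m)) hj hmin
  refine ⟨j, 1 - vecMulVec (Pi.single j 1) r, isUnit_one_sub_vecMulVec_single hrj,
    fun i j' => ?_, ?_, fun j' hj' => ?_⟩ <;> rw [mul_one_sub_vecMulVec_single_apply]
  · exact sub_mem (hA i j') (mul_mem_gradeBy_add_left (hA i j) (hr j'))
  · rwa [hrj, mul_zero, sub_zero]
  · rw [hclear j' hj', sub_self]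

theorem free_and_finite_ker_mulVecLin_of_mem_gradeBy {m n : ℕ} {p : Fin n → G} {q : Fin m → G}
    (A : Matrix (Fin m) (Fin n) k[G]) (hA : ∀ i j, A i j ∈ gradeBy k (q i + ·) (p j)) :
    Module.Free k[G] (LinearMap.ker A.mulVecLin) ∧
      Module.Finite k[G] (LinearMap.ker A.mulVecLin) := by
  induction m generalizing n with
  | zero =>
    rw [LinearMap.ker_eq_top.mpr (Subsingleton.elim _ _)]
    exact ⟨.of_equiv Submodule.topEquiv.symm, .equiv Submodule.topEquiv.symm⟩
  | succ m ih =>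
    by_cases hrow : ∀ j, A (Fin.last m) j = 0
    · rw [ker_mulVecLin_eq_of_last_row_eq_zero hrow]
      exact ih _ fun i j => hA _ _
    push Not at hrow
    cases n with
    | zero => exact hrow.choose.elim0
    | succ n =>
      obtain ⟨j, M, hM, hB, hpiv, hclear⟩ := exists_isUnit_clearing_last_row hA hrow
      let e := (kerMulVecLinMulEquiv A hM).symm.trans <| kerMulVecLinEquivOfPivot
        (mem_nonZeroDivisors_of_mem_gradeBy_add_left (hB _ _) hpiv) hclear
      obtain ⟨_, _⟩ := ih ((A * M).submatrix Fin.castSucc j.succAbove) fun i j' => hB _ _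
      exact ⟨.of_equiv e.symm, .equiv e.symm⟩

end Matrix

end

theorem IsAdmissible.apply_mem_gradeBy {κ : Type} [Field κ] {m n : ℕ} {q : Fin m → ℝ≥0}
    {p : Fin n → ℝ≥0} {A : Matrix (Fin m) (Fin n) (PersRing κ)} (hA : IsAdmissible q p A)
    (i : Fin m) (j : Fin n) : A i j ∈ gradeBy κ (q i + ·) (p j) := by
  rcases hA i j with h | ⟨hle, c, -, h⟩
  · rw [h]
    exact zero_mem _
  · rw [h, smul_single', mul_one]
    simpa only [add_tsub_cancel_of_le hle] using
      single_mem_gradeBy (fun d => q i + d) (p j - q i) c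

/-- **Lemma 2.5, 'in particular' part (kernel).**  The kernel of the `κ[ℝ₊]`-linear map
given by multiplication by a `(q, p)`-admissible matrix is a free and finitely generated
`κ[ℝ₊]`-module.  Note that `κ[ℝ₊]` is not a principal ideal domain, so this is not
automatic. -/
theorem ker_admissible_mulVecLin_free_and_finite (κ : Type) [Field κ] {m n : ℕ}
    (p : Fin n → ℝ≥0) (q : Fin m → ℝ≥0)
    (A : Matrix (Fin m) (Fin n) (PersRing κ)) (hA : IsAdmissible q p A) :
    Module.Free (PersRing κ) (LinearMap.ker A.mulVecLin) ∧
      Module.Finite (PersRing κ) (LinearMap.ker A.mulVecLin) :=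
  Matrix.free_and_finite_ker_mulVecLin_of_mem_gradeBy A hA.apply_mem_gradeBy

end
end

section
/- Let κ be a field, let p : Fin n → ℝ≥0 and q : Fin m → ℝ≥0 be degree vectors, let A be a (q,p)-admissible m×n matrix over κ[ℝ₊], and let φ : (Fin n → κ[ℝ₊]) → (Fin m → κ[ℝ₊]) be the κ[ℝ₊]-linear map given by multiplication by A (i.e. A.mulVecLin). Then the range (image) of φ is a free and finitely generated κ[ℝ₊]-module. -/
open scoped NNReal

noncomputable section

/-!
The columns of a `(q, p)`-admissible matrix are homogeneous vectors of the graded free module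
with basis degrees `q`, and the span of finitely many homogeneous vectors is free by Gaussian
elimination, one coordinate `j` at a time. Among the vectors with nonzero `j`-th entry take one,
`v₀`, of least degree: its `j`-th entry is a monomial dividing the `j`-th entry of every other
vector, so subtracting monomial multiples of `v₀` clears coordinate `j` while keeping all vectors
homogeneous, without changing the span. Since that monomial is a non-zero-divisor, `v₀` is
independent of the span of the cleared vectors, which has a basis by induction.
-/

open AddMonoidAlgebra Submodule Set

namespace AddMonoidAlgebra

variable {k G : Type*} [Field k] [AddCommMonoid G] [IsCancelAdd G]

theorem single_mul_eq_zero_iff {a : G} {c : k} (hc : c ≠ 0) {x : k[G]} :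
    single a c * x = 0 ↔ x = 0 := by
  refine ⟨fun h => ?_, fun h => by rw [h, mul_zero]⟩
  ext m
  simpa [hc] using congr(coeff $h (a + m))

end AddMonoidAlgebra

theorem Submodule.span_insert_range_sub_smul {R M β : Type*} [Ring R] [AddCommGroup M]
    [Module R M] {w : β → M} {v : M} (hv : v ∈ span R (range w)) (g : β → R) :
    span R (insert v (range fun b => w b - g b • v)) = span R (range w) := by
  apply le_antisymm
  · rw [span_le]
    rintro _ (rfl | ⟨b, rfl⟩)
    · exact hv
    · exact sub_mem (subset_span ⟨b, rfl⟩) (smul_mem _ _ hv)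
  · rw [span_le]
    rintro _ ⟨b, rfl⟩
    rw [← sub_add_cancel (w b) (g b • v)]
    exact add_mem (subset_span (.inr ⟨b, rfl⟩)) (smul_mem _ _ (subset_span (.inl rfl)))

namespace GradedFree

variable {k G ι : Type*} [Field k] [AddCommMonoid G]

/-- `v` is homogeneous of degree `d` in the graded free module whose basis vector `i` has
degree `q i`: each `v i` is `c T^(d - q i)`, and `0` unless `q i ≤ d`.  Multiplying by
`T^(q i)` expresses this without truncated subtraction. -/
def IsHomogeneous (q : ι → G) (d : G) (v : ι → k[G]) : Prop :=
  ∀ i, ∃ c : k, single (q i) 1 * v i = single d c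

section Homogeneous

variable {q : ι → G} {d : G} {v w : ι → k[G]}

theorem IsHomogeneous.sub (hv : IsHomogeneous q d v) (hw : IsHomogeneous q d w) :
    IsHomogeneous q d (v - w) := fun i => by
  obtain ⟨a, ha⟩ := hv i
  obtain ⟨b, hb⟩ := hw i
  exact ⟨a - b, by rw [Pi.sub_apply, mul_sub, ha, hb, single_sub]⟩

theorem IsHomogeneous.single_smul (hv : IsHomogeneous q d v) (e : G) (c : k) :
    IsHomogeneous q (d + e) (single e c • v) := fun i => by
  obtain ⟨a, ha⟩ := hv i
  exact ⟨c * a, by rw [Pi.smul_apply, smul_eq_mul, mul_left_comm, ha, single_mul_single,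
    add_comm]⟩

variable [IsCancelAdd G]

theorem IsHomogeneous.exists_ne_zero (hv : IsHomogeneous q d v) {i : ι} (hvi : v i ≠ 0) :
    ∃ c : k, c ≠ 0 ∧ single (q i) 1 * v i = single d c := by
  obtain ⟨c, hc⟩ := hv i
  refine ⟨c, fun hc0 => hvi ?_, hc⟩
  rwa [hc0, single_zero, single_mul_eq_zero_iff one_ne_zero] at hc

theorem IsHomogeneous.eq_zero_of_mul_apply_eq_zero (hv : IsHomogeneous q d v) {i : ι}
    (hvi : v i ≠ 0) {x : k[G]} (hx : x * v i = 0) : x = 0 := by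
  obtain ⟨c, hc0, hc⟩ := hv.exists_ne_zero hvi
  rw [← single_mul_eq_zero_iff hc0, ← hc, mul_assoc, mul_comm (v i), hx, mul_zero]

theorem IsHomogeneous.exists_sub_smul_apply_eq_zero [LE G] [ExistsAddOfLE G] {d₀ : G}
    {v₀ : ι → k[G]} (hv₀ : IsHomogeneous q d₀ v₀) {j : ι} (hv₀j : v₀ j ≠ 0)
    (hw : IsHomogeneous q d w) (hle : w j ≠ 0 → d₀ ≤ d) :
    ∃ g : k[G], IsHomogeneous q d (w - g • v₀) ∧ (w - g • v₀) j = 0 := by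
  by_cases hwj : w j = 0
  · exact ⟨0, by simpa using hw, by simpa using hwj⟩
  obtain ⟨e, rfl⟩ := exists_add_of_le (hle hwj)
  obtain ⟨c₀, hc₀0, hc₀⟩ := hv₀.exists_ne_zero hv₀j
  obtain ⟨c, hc⟩ := hw j
  refine ⟨single e (c / c₀), hw.sub (hv₀.single_smul e _), ?_⟩
  rw [← single_mul_eq_zero_iff (a := q j) one_ne_zero, Pi.sub_apply, Pi.smul_apply,
    smul_eq_mul, mul_sub, mul_left_comm, hc, hc₀, single_mul_single, div_mul_cancel₀ _ hc₀0,
    add_comm, sub_self]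

end Homogeneous

variable [IsCancelAdd G] [LinearOrder G] [ExistsAddOfLE G] {β : Type*} [Finite β]

theorem exists_linearIndependent_span_eq_of_apply_eq_zero (q : ι → G) (J : Finset ι)
    (deg : β → G) (w : β → ι → k[G]) (hw : ∀ b, IsHomogeneous q (deg b) (w b))
    (hwJ : ∀ b, ∀ i ∉ J, w b i = 0) :
    ∃ (r : ℕ) (v : Fin r → ι → k[G]), LinearIndependent k[G] v ∧
      span k[G] (range v) = span k[G] (range w) := by
  classical
  induction J using Finset.induction_on generalizing w with
  | empty =>
    refine ⟨0, Fin.elim0, linearIndependent_empty_type, ?_⟩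
    rw [range_eq_empty, span_empty, eq_comm, span_eq_bot]
    rintro _ ⟨b, rfl⟩
    exact funext fun i => hwJ b i (Finset.notMem_empty i)
  | insert j J _ IH =>
    by_cases hwj : ∀ b, w b j = 0
    · refine IH w hw fun b i hi => ?_
      by_cases hij : i = j
      · exact hij ▸ hwj b
      · exact hwJ b i (by simp [hij, hi])
    push Not at hwj
    obtain ⟨b₀, hb₀, hmin⟩ := exists_min_image {b | w b j ≠ 0} deg (toFinite _) hwj
    choose g hg using fun b =>
      (hw b₀).exists_sub_smul_apply_eq_zero hb₀ (hw b) (hmin b)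
    obtain ⟨r, u, hu, hspan⟩ := IH (fun b => w b - g b • w b₀) (fun b => (hg b).1)
      fun b i hi => by
        by_cases hij : i = j
        · exact hij ▸ (hg b).2
        · have hi' : i ∉ insert j J := by simp [hij, hi]
          rw [Pi.sub_apply, Pi.smul_apply, hwJ b i hi', hwJ b₀ i hi', smul_zero, sub_zero]
    refine ⟨r + 1, Fin.cons (w b₀) u, ?_, ?_⟩
    · refine hu.finCons' _ _ fun c y hy hcy => ?_
      have hyj : y j = 0 := by
        rw [hspan] at hy
        refine span_le (p := LinearMap.ker (LinearMap.proj j)).2 ?_ hy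
        rintro _ ⟨b, rfl⟩
        exact (hg b).2
      exact (hw b₀).eq_zero_of_mul_apply_eq_zero hb₀ (by simpa [hyj] using congr_fun hcy j)
    · rw [Fin.range_cons, span_insert, hspan, ← span_insert,
        span_insert_range_sub_smul (subset_span ⟨b₀, rfl⟩)]

theorem free_span_range_of_isHomogeneous [Finite ι] (q : ι → G) (deg : β → G)
    (w : β → ι → k[G]) (hw : ∀ b, IsHomogeneous q (deg b) (w b)) :
    Module.Free k[G] (span k[G] (range w)) := by
  have := Fintype.ofFinite ι
  obtain ⟨r, v, hv, hspan⟩ := exists_linearIndependent_span_eq_of_apply_eq_zero q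
    Finset.univ deg w hw fun b i hi => absurd (Finset.mem_univ i) hi
  exact hspan ▸ Module.Free.of_basis (Module.Basis.span hv)

end GradedFree

theorem IsAdmissible.isHomogeneous_col {κ : Type} [Field κ] {m n : ℕ} {q : Fin m → ℝ≥0}
    {p : Fin n → ℝ≥0} {A : Matrix (Fin m) (Fin n) (PersRing κ)} (hA : IsAdmissible q p A)
    (j : Fin n) : GradedFree.IsHomogeneous q (p j) (A.col j) := fun i => by
  rcases hA i j with h | ⟨hle, c, -, h⟩
  · exact ⟨0, by simp [Matrix.col, h]⟩
  · refine ⟨c, ?_⟩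
    rw [Matrix.col_apply, h, smul_single', mul_one, single_mul_single, one_mul,
      add_tsub_cancel_of_le hle]

/-- **Lemma 2.5, 'in particular' part (image).**  The range of the `κ[ℝ₊]`-linear map
given by multiplication by a `(q, p)`-admissible matrix is a free and finitely generated
`κ[ℝ₊]`-module.  Note that `κ[ℝ₊]` is not a principal ideal domain, so this is not
automatic. -/
theorem range_admissible_mulVecLin_free_and_finite (κ : Type) [Field κ] {m n : ℕ}
    (p : Fin n → ℝ≥0) (q : Fin m → ℝ≥0)
    (A : Matrix (Fin m) (Fin n) (PersRing κ)) (hA : IsAdmissible q p A) :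
    Module.Free (PersRing κ) (LinearMap.range A.mulVecLin) ∧
      Module.Finite (PersRing κ) (LinearMap.range A.mulVecLin) := by
  refine ⟨?_, inferInstance⟩
  rw [Matrix.range_mulVecLin]
  exact GradedFree.free_span_range_of_isHomogeneous q p A.col hA.isHomogeneous_col

end
end

section
/- Let κ be a field and let p : Fin n → ℝ≥0 and q : Fin m → ℝ≥0 be degree vectors. For t ∈ ℝ≥0, define the degree-t homogeneous part of Fin n → κ[ℝ₊] relative to p as the set of vectors v such that for every j, v j = 0 whenever t < p j, and otherwise v j is a κ-scalar multiple of the monomial T^(t − p j); call a κ[ℝ₊]-linear map φ : (Fin n → κ[ℝ₊]) → (Fin m → κ[ℝ₊]) graded if for every t ∈ ℝ≥0 it maps the degree-t part relative to p into the degree-t part relative to q. Then φ is graded if and only if its matrix A with respect to the standard bases is (q,p)-admissible, i.e. every entry A i j is either 0 or equals c • T^(p j − q i) for some nonzero c ∈ κ with q i ≤ p j. -/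
open scoped NNReal

noncomputable section

/-- The degree-`t` homogeneous part of `Fin n → κ[ℝ₊]` relative to the degree vector `p`:
the vectors `v` such that `v j = 0` whenever `t < p j`, and otherwise `v j` is a `κ`-scalar
multiple of the monomial `T ^ (t - p j)`. -/
def DegreePart {κ : Type} [Field κ] {n : ℕ} (p : Fin n → ℝ≥0) (t : ℝ≥0) :
    Set (Fin n → PersRing κ) :=
  {v | ∀ j, (t < p j → v j = 0) ∧
    (p j ≤ t → ∃ c : κ, v j = c • AddMonoidAlgebra.single (t - p j) (1 : κ))}

/-- A `κ[ℝ₊]`-linear map `φ : (Fin n → κ[ℝ₊]) → (Fin m → κ[ℝ₊])` is graded (with respect to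
the degree vectors `p` and `q`) if for every `t` it maps the degree-`t` part relative to `p`
into the degree-`t` part relative to `q`. -/
def IsGraded {κ : Type} [Field κ] {m n : ℕ} (p : Fin n → ℝ≥0) (q : Fin m → ℝ≥0)
    (φ : (Fin n → PersRing κ) →ₗ[PersRing κ] (Fin m → PersRing κ)) : Prop :=
  ∀ t : ℝ≥0, ∀ v ∈ DegreePart p t, φ v ∈ DegreePart q t

/-- **Lemma 2.4 (matrices of graded homomorphisms).**  A `κ[ℝ₊]`-linear map
`φ : (Fin n → κ[ℝ₊]) → (Fin m → κ[ℝ₊])` is graded with respect to the degree vectors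
`p` and `q` if and only if its matrix with respect to the standard bases is
`(q, p)`-admissible. -/
theorem isGraded_iff_matrix_isAdmissible (κ : Type) [Field κ] {m n : ℕ}
    (p : Fin n → ℝ≥0) (q : Fin m → ℝ≥0)
    (φ : (Fin n → PersRing κ) →ₗ[PersRing κ] (Fin m → PersRing κ)) :
    IsGraded p q φ ↔
      IsAdmissible q p (Matrix.of fun i j => φ (Pi.single j 1) i) := by
  constructor
  · intro h i j
    have hmem : (Pi.single j (1 : PersRing κ)) ∈ DegreePart p (p j) := by
      intro j'
      constructor
      · intro hlt
        rcases eq_or_ne j' j with rfl | hne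
        · exact absurd hlt (lt_irrefl _)
        · simp [Pi.single_apply, hne]
      · intro _
        rcases eq_or_ne j' j with rfl | hne
        · exact ⟨1, by simp [AddMonoidAlgebra.one_def]⟩
        · exact ⟨0, by simp [Pi.single_apply, hne]⟩
    have := h (p j) _ hmem i
    rcases lt_or_ge (p j) (q i) with h1 | h1
    · exact Or.inl (this.1 h1)
    · obtain ⟨c, hc⟩ := this.2 h1
      rcases eq_or_ne c 0 with rfl | hc0
      · exact Or.inl (by simpa using hc)
      · exact Or.inr ⟨h1, c, hc0, hc⟩
  · intro hA t v hv i
    simp only [IsAdmissible, Matrix.of_apply] at hA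
    have hvsum : v = ∑ j, v j • (Pi.single j 1 : Fin n → PersRing κ) := by
      funext x
      simp [Finset.sum_apply, Pi.single_apply, mul_ite, Finset.sum_ite_eq']
    have key : φ v i = ∑ j, v j * φ (Pi.single j 1) i := by
      conv_lhs => rw [hvsum]
      rw [map_sum]
      simp [Finset.sum_apply, smul_eq_mul, map_smul]
    constructor
    · intro hlt
      rw [key]
      apply Finset.sum_eq_zero
      intro j _
      rcases lt_or_ge t (p j) with h1 | h1
      · rw [(hv j).1 h1, zero_mul]
      · rcases hA i j with h2 | ⟨h2, _⟩
        · rw [h2, mul_zero]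
        · exact absurd (h2.trans h1) (not_le.2 hlt)
    · intro hle
      have hmem : φ v i ∈ Submodule.span κ {AddMonoidAlgebra.single (t - q i) (1 : κ)} := by
        rw [key]
        apply Submodule.sum_mem
        intro j _
        rcases lt_or_ge t (p j) with h1 | h1
        · rw [(hv j).1 h1, zero_mul]; exact Submodule.zero_mem _
        · rcases hA i j with h2 | ⟨h2, c, hc0, hc⟩
          · rw [h2, mul_zero]; exact Submodule.zero_mem _
          · obtain ⟨d, hd⟩ := (hv j).2 h1
            rw [hd, hc, smul_mul_smul_comm, AddMonoidAlgebra.single_mul_single, one_mul,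
              tsub_add_tsub_cancel h1 h2]
            exact Submodule.smul_mem _ _ (Submodule.mem_span_singleton_self _)
      obtain ⟨c, hc⟩ := Submodule.mem_span_singleton.1 hmem
      exact ⟨c, hc.symm⟩

end
end

section
/- Let κ be a field, let p : Fin n → ℝ≥0 and q : Fin m → ℝ≥0 be degree vectors, and let A be a (q,p)-admissible m×n matrix over κ[ℝ₊]. Then there exist natural numbers a and b and a vector s : Fin b → ℝ≥0 with s i > 0 for all i, such that the cokernel of the κ[ℝ₊]-linear map A.mulVecLin : (Fin n → κ[ℝ₊]) → (Fin m → κ[ℝ₊]) is isomorphic as a κ[ℝ₊]-module to the direct product (Fin a → κ[ℝ₊]) × Π i : Fin b, κ[ℝ₊] ⧸ Ideal.span {T^(s i)}. -/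
open scoped NNReal

noncomputable section

/-!
Over `κ[ℝ₊]` a nonzero entry of an admissible matrix is a unit times the monomial
`T ^ (p j - q i)`. Hence an entry `(i₀, j₀)` of least degree among the nonzero ones divides every
entry of its row and of its column. After the row operations clearing column `j₀` off the pivot,
the image of the matrix is the ideal `(A i₀ j₀)` in coordinate `i₀` times the image of the
remaining rows, so the bar `κ[ℝ₊] ⧸ (T ^ (p j₀ - q i₀))` splits off the cokernel (it vanishes when
the degree is `0`), and the remaining rows form again an admissible matrix. Induction on the
number of rows ends at a zero matrix, whose cokernel is free.
-/

namespace Submodule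

variable {R M N : Type*} [Ring R] [AddCommGroup M] [Module R M] [AddCommGroup N] [Module R N]

def quotientProdEquiv (S : Submodule R M) (J : Submodule R N) :
    ((M × N) ⧸ S.prod J) ≃ₗ[R] (M ⧸ S) × (N ⧸ J) :=
  (quotEquivOfEq _ _ (by rw [LinearMap.ker_prodMap, ker_mkQ, ker_mkQ])).trans
    ((S.mkQ.prodMap J.mkQ).quotKerEquivOfSurjective (S.mkQ_surjective.prodMap J.mkQ_surjective))

end Submodule

namespace Matrix

variable {R : Type*} [CommRing R] {m n : ℕ}

@[simps]
def pivotSplitEquiv (i₀ : Fin (m + 1)) (f : Fin m → R) :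
    (Fin (m + 1) → R) ≃ₗ[R] R × (Fin m → R) where
  toFun x := (x i₀, fun i => x (i₀.succAbove i) - f i * x i₀)
  invFun y := i₀.insertNth y.1 fun i => y.2 i + f i * y.1
  map_add' x y := by ext <;> simp only [Pi.add_apply, Prod.mk_add_mk]; ring
  map_smul' c x := by
    ext <;> simp only [Pi.smul_apply, smul_eq_mul, RingHom.id_apply, Prod.smul_mk]; ring
  left_inv x := by ext k; refine Fin.succAboveCases i₀ ?_ (fun i => ?_) k <;> simp
  right_inv y := by ext <;> simp

def pivotReduce (A : Matrix (Fin (m + 1)) (Fin n) R) (i₀ : Fin (m + 1)) (f : Fin m → R) :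
    Matrix (Fin m) (Fin n) R :=
  A.submatrix i₀.succAbove id - vecMulVec f (A i₀)

theorem pivotSplitEquiv_mulVec (A : Matrix (Fin (m + 1)) (Fin n) R) (i₀ : Fin (m + 1))
    (f : Fin m → R) (v : Fin n → R) :
    pivotSplitEquiv i₀ f (A *ᵥ v) = (A i₀ ⬝ᵥ v, pivotReduce A i₀ f *ᵥ v) := by
  ext i
  · rfl
  · simp only [pivotSplitEquiv_apply, pivotReduce, sub_mulVec, vecMulVec_mulVec, op_smul_eq_smul,
      Pi.sub_apply, Pi.smul_apply, smul_eq_mul, mul_comm]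
    rfl

theorem map_pivotSplitEquiv_range_mulVecLin (A : Matrix (Fin (m + 1)) (Fin n) R)
    {i₀ : Fin (m + 1)} {j₀ : Fin n} {f : Fin m → R}
    (hcol : ∀ i, A (i₀.succAbove i) j₀ = f i * A i₀ j₀) (hrow : ∀ j, A i₀ j₀ ∣ A i₀ j) :
    (LinearMap.range A.mulVecLin).map (pivotSplitEquiv i₀ f : _ →ₗ[R] _) =
      Submodule.prod (Ideal.span {A i₀ j₀}) (LinearMap.range (pivotReduce A i₀ f).mulVecLin) := by
  have hrow_mem (v : Fin n → R) : A i₀ ⬝ᵥ v ∈ Ideal.span {A i₀ j₀} :=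
    Ideal.sum_mem _ fun j _ => Ideal.mul_mem_right _ _ (Ideal.mem_span_singleton.mpr (hrow j))
  have hpivot : pivotSplitEquiv i₀ f (A *ᵥ Pi.single j₀ 1) = (A i₀ j₀, 0) := by
    ext i
    · simp
    · simp [hcol]
  apply le_antisymm
  · rintro _ ⟨_, ⟨v, rfl⟩, rfl⟩
    rw [LinearEquiv.coe_coe, mulVecLin_apply, pivotSplitEquiv_mulVec]
    exact ⟨hrow_mem v, v, rfl⟩
  · rintro ⟨y, _⟩ ⟨hy, v, rfl⟩
    obtain ⟨r, rfl⟩ := Ideal.mem_span_singleton'.mp hy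
    obtain ⟨w, hw⟩ := Ideal.mem_span_singleton'.mp (hrow_mem v)
    refine ⟨A *ᵥ (v + (r - w) • Pi.single j₀ 1), ⟨_, rfl⟩, ?_⟩
    rw [LinearEquiv.coe_coe, mulVec_add, mulVec_smul, map_add, map_smul, hpivot,
      pivotSplitEquiv_mulVec]
    ext
    · simp only [← hw, Prod.smul_mk, smul_eq_mul, Prod.mk_add_mk]
      ring
    · simp

def cokernelPivotEquiv (A : Matrix (Fin (m + 1)) (Fin n) R) {i₀ : Fin (m + 1)} {j₀ : Fin n}
    {f : Fin m → R} (hcol : ∀ i, A (i₀.succAbove i) j₀ = f i * A i₀ j₀)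
    (hrow : ∀ j, A i₀ j₀ ∣ A i₀ j) :
    ((Fin (m + 1) → R) ⧸ LinearMap.range A.mulVecLin) ≃ₗ[R]
      (R ⧸ Ideal.span {A i₀ j₀}) × ((Fin m → R) ⧸ LinearMap.range (pivotReduce A i₀ f).mulVecLin) :=
  (Submodule.Quotient.equiv _ _ _ (map_pivotSplitEquiv_range_mulVecLin A hcol hrow)).trans
    (Submodule.quotientProdEquiv _ _)

def cokernelZeroEquiv (m n : ℕ) :
    ((Fin m → R) ⧸ LinearMap.range (0 : Matrix (Fin m) (Fin n) R).mulVecLin) ≃ₗ[R] (Fin m → R) :=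
  Submodule.quotEquivOfEqBot _ (by rw [mulVecLin_zero, LinearMap.range_zero])

theorem exists_ne_zero_forall_le {ι₁ ι₂ α β : Type*} [Fintype ι₁] [Fintype ι₂] [Zero α]
    [LinearOrder β] {A : Matrix ι₁ ι₂ α} (hA : A ≠ 0) (w : ι₁ → ι₂ → β) :
    ∃ i₀ j₀, A i₀ j₀ ≠ 0 ∧ ∀ i j, A i j ≠ 0 → w i₀ j₀ ≤ w i j := by
  classical
  have hne : (Finset.univ.filter fun ij : ι₁ × ι₂ => A ij.1 ij.2 ≠ 0).Nonempty := by
    contrapose! hA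
    ext i j
    simpa using Finset.filter_eq_empty_iff.mp hA (Finset.mem_univ (i, j))
  obtain ⟨⟨i₀, j₀⟩, h₀, hmin⟩ := Finset.exists_min_image _ (fun ij : ι₁ × ι₂ => w ij.1 ij.2) hne
  exact ⟨i₀, j₀, (Finset.mem_filter.mp h₀).2, fun i j h => hmin (i, j) (by simpa using h)⟩

end Matrix

namespace PersRing

open AddMonoidAlgebra Matrix

variable {κ : Type} [Field κ]

def admissibleEntries (κ : Type) [Field κ] (s t : ℝ≥0) : Submodule κ (PersRing κ) :=
  if s ≤ t then κ ∙ single (t - s) 1 else ⊥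

theorem mem_admissibleEntries_iff {s t : ℝ≥0} {x : PersRing κ} :
    x ∈ admissibleEntries κ s t ↔ x = 0 ∨ (s ≤ t ∧ ∃ c : κ, c ≠ 0 ∧ x = c • single (t - s) 1) := by
  unfold admissibleEntries
  split_ifs with hst
  · simp only [Submodule.mem_span_singleton, hst, true_and]
    constructor
    · rintro ⟨c, rfl⟩
      by_cases hc : c = 0
      · simp [hc]
      · exact Or.inr ⟨c, hc, rfl⟩
    · rintro (rfl | ⟨c, -, rfl⟩)
      exacts [⟨0, zero_smul _ _⟩, ⟨c, rfl⟩]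
  · simp [hst]

theorem isAdmissible_iff {m n : ℕ} {q : Fin m → ℝ≥0} {p : Fin n → ℝ≥0}
    {A : Matrix (Fin m) (Fin n) (PersRing κ)} :
    IsAdmissible q p A ↔ ∀ i j, A i j ∈ admissibleEntries κ (q i) (p j) := by
  simp only [IsAdmissible, mem_admissibleEntries_iff]

theorem smul_single_one_mul_smul_single_one (a b : κ) (d e : ℝ≥0) :
    (a • single d (1 : κ)) * (b • single e 1) = (a * b) • single (d + e) 1 := by
  rw [smul_mul_smul_comm, single_mul_single, one_mul]

theorem mul_mem_admissibleEntries {r s t : ℝ≥0} {x y : PersRing κ}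
    (hx : x ∈ admissibleEntries κ r s) (hy : y ∈ admissibleEntries κ s t) :
    x * y ∈ admissibleEntries κ r t := by
  rw [mem_admissibleEntries_iff] at hx hy ⊢
  rcases hx with rfl | ⟨hrs, a, ha, rfl⟩
  · simp
  rcases hy with rfl | ⟨hst, b, hb, rfl⟩
  · simp
  refine Or.inr ⟨hrs.trans hst, a * b, mul_ne_zero ha hb, ?_⟩
  rw [smul_single_one_mul_smul_single_one, add_comm, tsub_add_tsub_cancel hst hrs]

theorem exists_mul_eq_of_mem_admissibleEntries {r s t : ℝ≥0} {x π : PersRing κ}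
    (hπ : π ∈ admissibleEntries κ s t) (hπ0 : π ≠ 0) (hx : x ∈ admissibleEntries κ r t)
    (hrs : x ≠ 0 → r ≤ s) : ∃ f ∈ admissibleEntries κ r s, x = f * π := by
  obtain ⟨hst, a, ha, rfl⟩ := (mem_admissibleEntries_iff.mp hπ).resolve_left hπ0
  rcases mem_admissibleEntries_iff.mp hx with rfl | ⟨-, c, hc, rfl⟩
  · exact ⟨0, zero_mem _, (zero_mul _).symm⟩
  have hrs := hrs (by simpa using hc)
  refine ⟨(c / a) • single (s - r) 1,
    mem_admissibleEntries_iff.mpr (Or.inr ⟨hrs, c / a, div_ne_zero hc ha, rfl⟩), ?_⟩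
  rw [smul_single_one_mul_smul_single_one, div_mul_cancel₀ c ha, add_comm,
    tsub_add_tsub_cancel hst hrs]

theorem dvd_of_mem_admissibleEntries {s t u : ℝ≥0} {x π : PersRing κ}
    (hπ : π ∈ admissibleEntries κ s t) (hπ0 : π ≠ 0) (hx : x ∈ admissibleEntries κ s u)
    (htu : x ≠ 0 → t ≤ u) : π ∣ x := by
  obtain ⟨hst, a, ha, rfl⟩ := (mem_admissibleEntries_iff.mp hπ).resolve_left hπ0
  rcases mem_admissibleEntries_iff.mp hx with rfl | ⟨-, c, hc, rfl⟩
  · exact dvd_zero _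
  refine ⟨(c / a) • single (u - t) 1, ?_⟩
  rw [smul_single_one_mul_smul_single_one, mul_div_cancel₀ c ha, add_comm,
    tsub_add_tsub_cancel (htu (by simpa using hc)) hst]

theorem span_smul_single_one {c : κ} (hc : c ≠ 0) (d : ℝ≥0) :
    Ideal.span {c • single d (1 : κ)} = Ideal.span {single d 1} := by
  rw [Algebra.smul_def]
  exact Ideal.span_singleton_mul_left_unit ((isUnit_iff_ne_zero.mpr hc).map _) _

theorem exists_cokernel_equiv_bar_prod {m n : ℕ} {q : Fin (m + 1) → ℝ≥0} {p : Fin n → ℝ≥0}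
    {A : Matrix (Fin (m + 1)) (Fin n) (PersRing κ)} (hA : IsAdmissible q p A) (hA0 : A ≠ 0) :
    ∃ (d : ℝ≥0) (q' : Fin m → ℝ≥0) (A' : Matrix (Fin m) (Fin n) (PersRing κ)),
      IsAdmissible q' p A' ∧
      Nonempty (((Fin (m + 1) → PersRing κ) ⧸ LinearMap.range A.mulVecLin) ≃ₗ[PersRing κ]
        (PersRing κ ⧸ Ideal.span {single d (1 : κ)}) ×
          ((Fin m → PersRing κ) ⧸ LinearMap.range A'.mulVecLin)) := by
  rw [isAdmissible_iff] at hA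
  obtain ⟨i₀, j₀, hpivot, hmin⟩ := exists_ne_zero_forall_le hA0 fun i j => p j - q i
  obtain ⟨-, c, hc, hA₀⟩ := (mem_admissibleEntries_iff.mp (hA i₀ j₀)).resolve_left hpivot
  have hle (i j) (h : A i j ≠ 0) : q i ≤ p j :=
    ((mem_admissibleEntries_iff.mp (hA i j)).resolve_left h).1
  choose f hf hcol using fun i => exists_mul_eq_of_mem_admissibleEntries (hA i₀ j₀) hpivot
    (hA (i₀.succAbove i) j₀) fun h => (tsub_le_tsub_iff_left (hle _ _ h)).mp (hmin _ _ h)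
  have hrow (j) : A i₀ j₀ ∣ A i₀ j := dvd_of_mem_admissibleEntries (hA i₀ j₀) hpivot (hA i₀ j)
    fun h => (tsub_le_tsub_iff_right (hle _ _ h)).mp (hmin _ _ h)
  refine ⟨p j₀ - q i₀, q ∘ i₀.succAbove, pivotReduce A i₀ f, ?_,
    ⟨(cokernelPivotEquiv A hcol hrow).trans ((Submodule.quotEquivOfEq _ _ ?_).prodCongr
      (LinearEquiv.refl _ _))⟩⟩
  · exact isAdmissible_iff.mpr fun i j =>
      sub_mem (hA _ _) (mul_mem_admissibleEntries (hf i) (hA i₀ j))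
  · rw [hA₀, span_smul_single_one hc]

variable (κ) in
def HasBarcode (M : Type) [AddCommGroup M] [Module (PersRing κ) M] : Prop :=
  ∃ (a b : ℕ) (s : Fin b → ℝ≥0), (∀ i, 0 < s i) ∧
    Nonempty (M ≃ₗ[PersRing κ] (Fin a → PersRing κ) ×
      ∀ i : Fin b, PersRing κ ⧸ Ideal.span {single (s i) (1 : κ)})

variable {M N : Type} [AddCommGroup M] [Module (PersRing κ) M] [AddCommGroup N]
  [Module (PersRing κ) N]

theorem HasBarcode.of_linearEquiv (e : M ≃ₗ[PersRing κ] N) (h : HasBarcode κ N) :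
    HasBarcode κ M :=
  let ⟨a, b, s, hs, ⟨e'⟩⟩ := h
  ⟨a, b, s, hs, ⟨e.trans e'⟩⟩

theorem hasBarcode_free (a : ℕ) : HasBarcode κ (Fin a → PersRing κ) :=
  ⟨a, 0, Fin.elim0, fun i => i.elim0, ⟨LinearEquiv.prodUnique.symm⟩⟩

theorem HasBarcode.bar_prod (d : ℝ≥0) (h : HasBarcode κ M) :
    HasBarcode κ ((PersRing κ ⧸ Ideal.span {single d (1 : κ)}) × M) := by
  obtain ⟨a, b, s, hs, ⟨e⟩⟩ := h
  rcases eq_zero_or_pos d with rfl | hd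
  · have : Subsingleton (PersRing κ ⧸ Ideal.span {(single 0 1 : PersRing κ)}) := by
      rw [Ideal.Quotient.subsingleton_iff, ← one_def, Ideal.span_singleton_one]
    let := uniqueOfSubsingleton (0 : PersRing κ ⧸ Ideal.span {(single 0 1 : PersRing κ)})
    exact ⟨a, b, s, hs, ⟨LinearEquiv.uniqueProd.trans e⟩⟩
  · refine ⟨a, b + 1, Fin.cons d s, Fin.cases hd hs, ⟨?_⟩⟩
    exact ((LinearEquiv.refl _ _).prodCongr e).trans <|
      (LinearEquiv.prodAssoc _ _ _ _).symm.trans <|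
      ((LinearEquiv.prodComm _ _ _).prodCongr (LinearEquiv.refl _ _)).trans <|
      (LinearEquiv.prodAssoc _ _ _ _).trans <|
      (LinearEquiv.refl _ _).prodCongr (Fin.consLinearEquiv _ fun i =>
        PersRing κ ⧸ Ideal.span {single (Fin.cons (α := fun _ => ℝ≥0) d s i) (1 : κ)})

theorem hasBarcode_cokernel_zero (m n : ℕ) :
    HasBarcode κ ((Fin m → PersRing κ) ⧸
      LinearMap.range (0 : Matrix (Fin m) (Fin n) (PersRing κ)).mulVecLin) :=
  (hasBarcode_free m).of_linearEquiv (cokernelZeroEquiv m n)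

theorem IsAdmissible.hasBarcode_cokernel {m n : ℕ} {q : Fin m → ℝ≥0} {p : Fin n → ℝ≥0}
    {A : Matrix (Fin m) (Fin n) (PersRing κ)} (hA : IsAdmissible q p A) :
    HasBarcode κ ((Fin m → PersRing κ) ⧸ LinearMap.range A.mulVecLin) := by
  induction m with
  | zero => exact Subsingleton.elim 0 A ▸ hasBarcode_cokernel_zero 0 n
  | succ m ih =>
    by_cases hA0 : A = 0
    · exact hA0 ▸ hasBarcode_cokernel_zero (m + 1) n
    obtain ⟨d, q', A', hA', ⟨e⟩⟩ := exists_cokernel_equiv_bar_prod hA hA0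
    exact ((ih hA').bar_prod d).of_linearEquiv e

end PersRing

/-- **Barcode classification (Proposition 2.7, existence part).**  The cokernel of the
`κ[ℝ₊]`-linear map given by a `(q, p)`-admissible matrix is isomorphic, as a
`κ[ℝ₊]`-module, to a finite direct sum of copies of `κ[ℝ₊]` (infinite bars) and of
quotients `κ[ℝ₊] ⧸ (T ^ s i)` with `s i > 0` (finite bars of positive length). -/
theorem cokernel_admissible_classification (κ : Type) [Field κ] {m n : ℕ}
    (p : Fin n → ℝ≥0) (q : Fin m → ℝ≥0)
    (A : Matrix (Fin m) (Fin n) (PersRing κ)) (hA : IsAdmissible q p A) :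
    ∃ (a b : ℕ) (s : Fin b → ℝ≥0), (∀ i, 0 < s i) ∧
      Nonempty (((Fin m → PersRing κ) ⧸ LinearMap.range A.mulVecLin) ≃ₗ[PersRing κ]
        ((Fin a → PersRing κ) ×
          ∀ i : Fin b,
            PersRing κ ⧸ Ideal.span {AddMonoidAlgebra.single (s i) (1 : κ)})) :=
  PersRing.IsAdmissible.hasBarcode_cokernel hA

end
end

section
/- Let κ be a field. For all s, r ∈ ℝ≥0 there is an isomorphism of κ[ℝ₊]-modules (κ[ℝ₊] ⧸ Ideal.span {T^s}) ⊗_{κ[ℝ₊]} (κ[ℝ₊] ⧸ Ideal.span {T^r}) ≃ κ[ℝ₊] ⧸ Ideal.span {T^(min s r)}. -/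
open scoped NNReal

noncomputable section

theorem aux_quot_tensor {R : Type*} [CommRing R] (I J : Ideal R) (h : J ≤ I) :
    Nonempty ((TensorProduct R (R ⧸ I) (R ⧸ J)) ≃ₗ[R] R ⧸ I) := by
  have h1 : I • (⊤ : Submodule R (R ⧸ J)) = Submodule.map J.mkQ (I : Submodule R R) := by
    have h2 : Submodule.map J.mkQ ((I : Submodule R R) • ⊤) =
        I • (⊤ : Submodule R (R ⧸ J)) := by
      rw [Submodule.map_smul'', Submodule.map_top, Submodule.range_mkQ]
    rw [← h2, smul_eq_mul, Ideal.mul_top]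
  exact ⟨(TensorProduct.quotTensorEquivQuotSMul (R ⧸ J) I) ≪≫ₗ
    (Submodule.quotEquivOfEq _ _ h1) ≪≫ₗ
    (Submodule.quotientQuotientEquivQuotient J I h)⟩

theorem single_span_le {κ : Type} [Field κ] {s r : ℝ≥0} (h : s ≤ r) :
    Ideal.span {AddMonoidAlgebra.single r (1 : κ)} ≤
    Ideal.span {AddMonoidAlgebra.single s (1 : κ)} := by
  rw [Ideal.span_singleton_le_span_singleton]
  refine ⟨AddMonoidAlgebra.single (r - s) 1, ?_⟩
  rw [AddMonoidAlgebra.single_mul_single, one_mul, add_tsub_cancel_of_le h]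

/-- **Tensor product of bars (Proposition 2.8, formula (4)).**  For `s, r ∈ ℝ≥0`, the
tensor product of the bars `κ[ℝ₊] ⧸ (T^s)` and `κ[ℝ₊] ⧸ (T^r)` is the bar
`κ[ℝ₊] ⧸ (T^(min s r))`. -/
theorem bar_tensor_bar (κ : Type) [Field κ] (s r : ℝ≥0) :
    Nonempty
      ((TensorProduct (PersRing κ)
          (PersRing κ ⧸ Ideal.span {AddMonoidAlgebra.single s (1 : κ)})
          (PersRing κ ⧸ Ideal.span {AddMonoidAlgebra.single r (1 : κ)}))
        ≃ₗ[PersRing κ]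
        (PersRing κ ⧸ Ideal.span {AddMonoidAlgebra.single (min s r) (1 : κ)})) := by
  rcases le_total s r with h | h
  · rw [min_eq_left h]
    exact aux_quot_tensor _ _ (single_span_le h)
  · rw [min_eq_right h]
    obtain ⟨e⟩ := aux_quot_tensor _ _ (single_span_le (κ := κ) h)
    exact ⟨(TensorProduct.comm _ _ _).trans e⟩

end
end

section
/- Let κ be a field. For all s, r ∈ ℝ≥0, the first Tor module Tor₁^{κ[ℝ₊]}(κ[ℝ₊] ⧸ Ideal.span {T^s}, κ[ℝ₊] ⧸ Ideal.span {T^r}), computed in the category of κ[ℝ₊]-modules, is isomorphic to κ[ℝ₊] ⧸ Ideal.span {T^(min s r)}. -/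
open CategoryTheory
open scoped NNReal

noncomputable section

/-!
Since `T^r` is a non-zero-divisor, the bar `κ[ℝ₊] ⧸ (T^r)` has the free resolution
`0 → κ[ℝ₊] --T^r--> κ[ℝ₊]`, so tensoring it with `M` shows that `Tor₁(M, κ[ℝ₊] ⧸ (T^r))`
is the `T^r`-torsion of `M`. In `M = κ[ℝ₊] ⧸ (T^s)` that torsion is generated by
`T^(s - r)` (truncated subtraction), and the annihilator of this generator is
`(T^(s - (s - r))) = (T^(min s r))`.
-/

universe u

open Limits ZeroObject MonoidalCategory

namespace ModuleCat

variable {R : Type u} [CommRing R] (x : R)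

def mulComplexX : ℕ → ModuleCat.{u} R
  | 0 | 1 => of R R
  | _ + 2 => 0

def mulComplexD : ∀ n, mulComplexX (R := R) (n + 1) ⟶ mulComplexX n
  | 0 => ofHom (LinearMap.toSpanSingleton R R x)
  | _ + 1 => 0

def mulComplex : ChainComplex (ModuleCat.{u} R) ℕ :=
  ChainComplex.of mulComplexX (mulComplexD x) (fun _ => zero_comp)

lemma mulComplex_d_one_zero :
    (mulComplex x).d 1 0 = ofHom (LinearMap.toSpanSingleton R R x) :=
  ChainComplex.of_d mulComplexX (mulComplexD x) 0

lemma mulComplex_d_two_one : (mulComplex x).d 2 1 = 0 :=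
  ChainComplex.of_d mulComplexX (mulComplexD x) 1

instance (n : ℕ) : Projective ((mulComplex x).X n) := by
  match n with
  | 0 | 1 => exact (IsProjective.iff_projective _).mp inferInstance
  | _ + 2 => exact Projective.zero_projective

lemma range_toSpanSingleton_eq_ker_mkQ :
    LinearMap.range (LinearMap.toSpanSingleton R R x) = LinearMap.ker (Ideal.span {x}).mkQ := by
  rw [LinearMap.range_toSpanSingleton, Submodule.ker_mkQ]

def mulComplexπ : mulComplex x ⟶ (ChainComplex.single₀ _).obj (of R (R ⧸ Ideal.span {x})) :=
  (ChainComplex.toSingle₀Equiv _ _).symm ⟨ofHom (Ideal.span {x}).mkQ, by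
    rw [mulComplex_d_one_zero]
    exact hom_ext (LinearMap.range_le_ker_iff.1 (range_toSpanSingleton_eq_ker_mkQ x).le)⟩

lemma quasiIso_mulComplexπ (hx : IsSMulRegular R x) : QuasiIso (mulComplexπ x) where
  quasiIsoAt n := by
    rcases n with _ | _ | n
    · rw [ChainComplex.quasiIsoAt₀_iff, ShortComplex.quasiIso_iff_of_zeros' _ rfl rfl rfl]
      constructor
      · rw [ShortComplex.moduleCat_exact_iff_range_eq_ker]
        exact range_toSpanSingleton_eq_ker_mkQ x
      · exact (epi_iff_surjective _).2 (Ideal.span {x}).mkQ_surjective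
    · rw [quasiIsoAt_iff_exactAt' (hL := ChainComplex.exactAt_succ_single_obj ..),
        HomologicalComplex.exactAt_iff' _ 2 1 0 (by simp) (by simp),
        ShortComplex.moduleCat_exact_iff_range_eq_ker]
      change LinearMap.range 0 = LinearMap.ker (LinearMap.toSpanSingleton R R x)
      rw [LinearMap.range_zero, eq_comm, LinearMap.ker_eq_bot]
      exact fun a b h => hx <| by
        simpa only [LinearMap.toSpanSingleton_apply, smul_eq_mul, mul_comm] using h
    · rw [quasiIsoAt_iff_exactAt' (hL := ChainComplex.exactAt_succ_single_obj ..),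
        HomologicalComplex.exactAt_iff' _ (n + 3) (n + 2) (n + 1) (by simp) (by simp)]
      exact ShortComplex.exact_of_isZero_X₂ _ (isZero_zero _)

def quotSpanSingletonResolution (hx : IsSMulRegular R x) :
    ProjectiveResolution (of R (R ⧸ Ideal.span {x})) where
  complex := mulComplex x
  π := mulComplexπ x
  quasiIso := quasiIso_mulComplexπ x hx

lemma rid_comp_whiskerLeft_toSpanSingleton (M : ModuleCat.{u} R) :
    (TensorProduct.rid R M).toLinearMap ∘ₗ (M ◁ ofHom (LinearMap.toSpanSingleton R R x)).hom =
      DistribSMul.toLinearMap R M x ∘ₗ (TensorProduct.rid R M).toLinearMap := by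
  refine TensorProduct.ext' fun m r => ?_
  rw [LinearMap.comp_apply, LinearEquiv.coe_coe, ModuleCat.MonoidalCategory.whiskerLeft_apply]
  simp [mul_smul]

lemma map_ker_whiskerLeft_toSpanSingleton (M : ModuleCat.{u} R) :
    (LinearMap.ker (M ◁ ofHom (LinearMap.toSpanSingleton R R x)).hom).map
      (TensorProduct.rid R M).toLinearMap = Submodule.torsionBy R M x := by
  rw [← LinearEquiv.ker_comp (TensorProduct.rid R M), rid_comp_whiskerLeft_toSpanSingleton,
    LinearMap.ker_comp, Submodule.map_comap_eq_of_surjective (TensorProduct.rid R M).surjective]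
  rfl

def torOneQuotSpanSingletonIso (M : ModuleCat.{u} R) (hx : IsSMulRegular R x) :
    ((Tor (ModuleCat R) 1).obj M).obj (of R (R ⧸ Ideal.span {x})) ≅
      of R (Submodule.torsionBy R M x) :=
  (quotSpanSingletonResolution x hx).isoLeftDerivedObj _ 1 ≪≫
    HomologicalComplex.homologyIsoSc' _ 2 1 0 (by simp) (by simp) ≪≫
    (ShortComplex.asIsoHomologyπ _ ((congrArg (M ◁ ·) (mulComplex_d_two_one x)).trans
      MonoidalPreadditive.whiskerLeft_zero)).symm ≪≫
    ShortComplex.moduleCatCyclesIso _ ≪≫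
    (LinearEquiv.ofSubmodules (TensorProduct.rid R M) _ _
      (map_ker_whiskerLeft_toSpanSingleton x M)).toModuleIso

end ModuleCat

lemma Ideal.Quotient.mk_mem_torsionBy_iff {R : Type*} [CommRing R] (x y u : R) :
    Ideal.Quotient.mk (Ideal.span {y}) u ∈ Submodule.torsionBy R (R ⧸ Ideal.span {y}) x ↔
      y ∣ x * u := by
  rw [Submodule.mem_torsionBy_iff, ← Ideal.Quotient.mk_eq_mk, ← Submodule.Quotient.mk_smul,
    Submodule.Quotient.mk_eq_zero, smul_eq_mul, Ideal.mem_span_singleton]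

namespace AddMonoidAlgebra

section Semiring

variable {k G : Type*} [Semiring k]

lemma isLeftRegular_single_one [Add G] [IsLeftCancelAdd G] (a : G) :
    IsLeftRegular (single a (1 : k)) := by
  intro f g h
  ext m
  have coeff_single_one_mul_add (f : k[G]) : (single a (1 : k) * f).coeff (a + m) = f.coeff m := by
    rw [coeff_single_mul_eq_mul_coeff m (fun _ _ => add_right_inj a), one_mul]
  rw [← coeff_single_one_mul_add f, ← coeff_single_one_mul_add g]
  exact congrArg (fun p => p.coeff (a + m)) h

variable [AddCommMonoid G] [LinearOrder G] [CanonicallyOrderedAdd G] [Sub G] [OrderedSub G]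

lemma single_one_dvd_single_one {a b : G} (h : a ≤ b) : single a (1 : k) ∣ single b 1 :=
  ⟨single (b - a) 1, by rw [single_mul_single, one_mul, add_tsub_cancel_of_le h]⟩

lemma single_one_dvd_single_one_mul_iff [IsLeftCancelAdd G] (a b : G) (f : k[G]) :
    single a (1 : k) ∣ single b 1 * f ↔ single (a - b) (1 : k) ∣ f := by
  constructor
  · rintro ⟨g, hg⟩
    rcases le_total a b with hab | hba
    · rw [tsub_eq_zero_of_le hab, ← one_def]
      exact one_dvd f
    · refine ⟨g, isLeftRegular_single_one b (?_ : single b 1 * f = single b 1 * _)⟩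
      rw [hg, ← mul_assoc, single_mul_single, one_mul, add_tsub_cancel_of_le hba]
  · rintro ⟨g, rfl⟩
    rw [← mul_assoc, single_mul_single, one_mul]
    exact (single_one_dvd_single_one le_add_tsub).mul_right g

end Semiring

section CommRing

variable {k G : Type*} [CommRing k] [AddCommMonoid G] [Sub G]

variable (k) in
def mulSingleTsubMkQ (s r : G) : k[G] →ₗ[k[G]] k[G] ⧸ Ideal.span {single s (1 : k)} :=
  (Ideal.span {single s (1 : k)}).mkQ ∘ₗ LinearMap.mulLeft k[G] (single (s - r) 1)

lemma mulSingleTsubMkQ_apply (s r : G) (u : k[G]) :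
    mulSingleTsubMkQ k s r u = Ideal.Quotient.mk _ (single (s - r) 1 * u) :=
  rfl

variable [LinearOrder G] [CanonicallyOrderedAdd G] [OrderedSub G] [IsLeftCancelAdd G]

lemma ker_mulSingleTsubMkQ (s r : G) :
    LinearMap.ker (mulSingleTsubMkQ k s r) = Ideal.span {single (min s r) 1} := by
  ext u
  rw [LinearMap.mem_ker, mulSingleTsubMkQ_apply, Ideal.Quotient.eq_zero_iff_dvd,
    single_one_dvd_single_one_mul_iff, tsub_tsub_eq_min, Ideal.mem_span_singleton]

lemma range_mulSingleTsubMkQ (s r : G) :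
    LinearMap.range (mulSingleTsubMkQ k s r) =
      Submodule.torsionBy k[G] (k[G] ⧸ Ideal.span {single s (1 : k)}) (single r 1) := by
  refine le_antisymm ?_ fun q hq => ?_
  · rintro _ ⟨u, rfl⟩
    rw [mulSingleTsubMkQ_apply, Ideal.Quotient.mk_mem_torsionBy_iff,
      single_one_dvd_single_one_mul_iff]
    exact dvd_mul_right _ _
  · obtain ⟨v, rfl⟩ := Ideal.Quotient.mk_surjective q
    rw [Ideal.Quotient.mk_mem_torsionBy_iff, single_one_dvd_single_one_mul_iff] at hq
    obtain ⟨w, rfl⟩ := hq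
    exact ⟨w, mulSingleTsubMkQ_apply s r w⟩

def torsionByQuotSpanSingleEquiv (s r : G) :
    Submodule.torsionBy k[G] (k[G] ⧸ Ideal.span {single s (1 : k)}) (single r 1) ≃ₗ[k[G]]
      k[G] ⧸ Ideal.span {single (min s r) (1 : k)} :=
  ((Submodule.quotEquivOfEq _ _ (ker_mulSingleTsubMkQ s r).symm).trans
    ((mulSingleTsubMkQ k s r).quotKerEquivRange.trans
      (LinearEquiv.ofEq _ _ (range_mulSingleTsubMkQ s r)))).symm

end CommRing

end AddMonoidAlgebra

/-- **Tor of bars (Proposition 2.8, formula (5)).**  For `s, r ∈ ℝ≥0`, the first Tor module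
`Tor₁(κ[ℝ₊] ⧸ (T^s), κ[ℝ₊] ⧸ (T^r))`, computed in the category of `κ[ℝ₊]`-modules, is
isomorphic to the bar `κ[ℝ₊] ⧸ (T^(min s r))`. -/
theorem tor_one_bar_bar (κ : Type) [Field κ] (s r : ℝ≥0) :
    Nonempty
      ((((Tor (ModuleCat (PersRing κ)) 1).obj
          (ModuleCat.of (PersRing κ)
            (PersRing κ ⧸ Ideal.span {AddMonoidAlgebra.single s (1 : κ)}))).obj
          (ModuleCat.of (PersRing κ)
            (PersRing κ ⧸ Ideal.span {AddMonoidAlgebra.single r (1 : κ)})))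
        ≅ ModuleCat.of (PersRing κ)
            (PersRing κ ⧸ Ideal.span {AddMonoidAlgebra.single (min s r) (1 : κ)})) :=
  ⟨ModuleCat.torOneQuotSpanSingletonIso _ _
      (AddMonoidAlgebra.isLeftRegular_single_one r).isSMulRegular ≪≫
    (AddMonoidAlgebra.torsionByQuotSpanSingleEquiv s r).toModuleIso⟩

end
end

section
/- Let κ be a field, let s ∈ ℝ≥0, and let N be any κ[ℝ₊]-module. Then for every n ≥ 2, the Tor module Tor_n^{κ[ℝ₊]}(κ[ℝ₊] ⧸ Ideal.span {T^s}, N), computed in the category of κ[ℝ₊]-modules, is the zero module. -/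
/-!
`Tor` is derived in the second variable, so we resolve `N` rather than the bar.
Tensoring `0 → R → R → R ⧸ (f) → 0` (multiplication by a non-zero-divisor `f`) with a
projective, hence flat, resolution `P` of `N` gives a short exact sequence of complexes.
Its two outer terms are `R ⊗ P`, acyclic in positive degrees because `R` is flat, so the long
exact homology sequence forces `Tor_n(R ⧸ (f), N) = H_n((R ⧸ (f)) ⊗ P) = 0` for `n ≥ 2`.
In the domain `κ[ℝ₊]`, `T^s` is such an `f`.
-/

open CategoryTheory
open scoped NNReal

noncomputable section

universe u

open Limits MonoidalCategory Pointwise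

namespace CategoryTheory.ShortComplex

variable {C : Type*} [Category C] [MonoidalCategory C] [Preadditive C] [MonoidalPreadditive C]
  {ι : Type*} {c : ComplexShape ι}

def tensorComplex (S : ShortComplex C) (K : HomologicalComplex C c) :
    ShortComplex (HomologicalComplex C c) where
  X₁ := (((tensoringLeft C).obj S.X₁).mapHomologicalComplex c).obj K
  X₂ := (((tensoringLeft C).obj S.X₂).mapHomologicalComplex c).obj K
  X₃ := (((tensoringLeft C).obj S.X₃).mapHomologicalComplex c).obj K
  f := (NatTrans.mapHomologicalComplex ((tensoringLeft C).map S.f) c).app K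
  g := (NatTrans.mapHomologicalComplex ((tensoringLeft C).map S.g) c).app K
  zero := by
    ext i
    change S.f ▷ K.X i ≫ S.g ▷ K.X i = 0
    rw [← comp_whiskerRight, S.zero, MonoidalPreadditive.zero_whiskerRight]

end CategoryTheory.ShortComplex

variable {R : Type u} [CommRing R]

lemma CategoryTheory.ShortComplex.ShortExact.tensorComplex {S : ShortComplex (ModuleCat.{u} R)}
    (hS : S.ShortExact) {ι : Type*} {c : ComplexShape ι} (K : HomologicalComplex (ModuleCat R) c)
    [∀ i, Module.Flat R (K.X i)] : (S.tensorComplex K).ShortExact :=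
  HomologicalComplex.shortExact_of_degreewise_shortExact _ fun i =>
    hS.map_of_exact (tensorRight (K.X i))

lemma isZero_Tor_succ_of_flat (X N : ModuleCat.{u} R) [Module.Flat R X] (n : ℕ) :
    IsZero (((Tor (ModuleCat R) (n + 1)).obj X).obj N) :=
  let P := projectiveResolution N
  have hexact : (((tensorLeft X).mapHomologicalComplex _).obj P.complex).ExactAt (n + 1) :=
    (P.complex_exactAt_succ n).map (tensorLeft X)
  hexact.isZero_homology.of_iso (P.isoLeftDerivedObj _ _)

lemma isZero_Tor_succ_of_shortExact {S : ShortComplex (ModuleCat.{u} R)} (hS : S.ShortExact)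
    (N : ModuleCat.{u} R) (n : ℕ)
    (h₂ : IsZero (((Tor (ModuleCat R) (n + 1)).obj S.X₂).obj N))
    (h₁ : IsZero (((Tor (ModuleCat R) n).obj S.X₁).obj N)) :
    IsZero (((Tor (ModuleCat R) (n + 1)).obj S.X₃).obj N) := by
  let P := projectiveResolution N
  have (i : ℕ) : Module.Flat R (P.complex.X i) :=
    have := (IsProjective.iff_projective (P.complex.X i)).mpr (P.projective i)
    Module.Flat.of_projective
  have hexact := (hS.tensorComplex P.complex).homology_exact₃ (n + 1) n (by simp)
  refine (hexact.isZero_X₂ ?_ ?_).of_iso (P.isoLeftDerivedObj _ (n + 1))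
  · exact (h₂.of_iso (P.isoLeftDerivedObj _ _).symm).eq_of_src _ _
  · exact (h₁.of_iso (P.isoLeftDerivedObj _ _).symm).eq_of_tgt _ _

lemma isZero_Tor_quotient_span_singleton {f : R} (hf : IsSMulRegular R f) (N : ModuleCat.{u} R)
    (n : ℕ) :
    IsZero (((Tor (ModuleCat R) (n + 2)).obj (ModuleCat.of R (R ⧸ Ideal.span {f}))).obj N) := by
  have hspan : f • (⊤ : Submodule R R) = Ideal.span {f} := by
    rw [← Submodule.ideal_span_singleton_smul, smul_eq_mul, Ideal.mul_top]
  have hS := IsSMulRegular.smulShortComplex_shortExact (M := ModuleCat.of R R) hf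
  have hR (k : ℕ) := isZero_Tor_succ_of_flat (ModuleCat.of R R) N k
  exact (isZero_Tor_succ_of_shortExact hS N (n + 1) (hR _) (hR _)).of_iso
    (((Tor _ _).mapIso (Submodule.quotEquivOfEq _ _ hspan).toModuleIso).app N).symm

/-- **Vanishing of higher Tor (Proposition 2.8, final statement).**  For every `s ∈ ℝ≥0`,
every `κ[ℝ₊]`-module `N`, and every `n ≥ 2`, the Tor module
`Tor_n(κ[ℝ₊] ⧸ (T^s), N)`, computed in the category of `κ[ℝ₊]`-modules, is zero. -/
theorem tor_bar_eq_zero_of_two_le (κ : Type) [Field κ] (s : ℝ≥0)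
    (N : ModuleCat (PersRing κ)) (n : ℕ) (hn : 2 ≤ n) :
    Limits.IsZero
      (((Tor (ModuleCat (PersRing κ)) n).obj
        (ModuleCat.of (PersRing κ)
          (PersRing κ ⧸ Ideal.span {AddMonoidAlgebra.single s (1 : κ)}))).obj N) := by
  obtain ⟨m, rfl⟩ := Nat.exists_eq_add_of_le' hn
  have hTs : (AddMonoidAlgebra.single s (1 : κ) : PersRing κ) ≠ 0 := by simp
  exact isZero_Tor_quotient_span_singleton (IsSMulRegular.of_ne_zero hTs) N m

end
end

section
/- Let κ be a field. The ideal of κ[ℝ₊] generated by the set of monomials {T^t : t ∈ ℝ≥0, t > 0} (equivalently, the ideal of all polynomials with vanishing constant coefficient) is not finitely generated as an ideal. In particular, κ[ℝ₊] is not a Noetherian ring. -/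
/-!
The augmentation ideal is the union of the ideals `I_ε` generated by the monomials `T^t`,
`t ≥ ε`, over `ε > 0`; this family is directed because `ℝ≥0` is linearly ordered. As `[ε, ∞)` is
an upper set, a polynomial lies in `I_ε` iff all its exponents are `≥ ε`, so `I_ε` misses
`T^(ε/2)` and is strictly smaller than the union. A finitely generated ideal is a compact element
of the lattice of ideals, hence never the supremum of a directed family of strictly smaller ideals.
-/

open scoped NNReal

noncomputable section

/-- The ideal of `κ[ℝ₊]` generated by the monomials `T^t` with `t > 0`, i.e. the ideal of
all polynomials with vanishing constant coefficient. -/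
def augmentationIdeal (κ : Type) [Field κ] : Ideal (PersRing κ) :=
  Ideal.span {x : PersRing κ | ∃ t : ℝ≥0, 0 < t ∧ x = AddMonoidAlgebra.single t (1 : κ)}

open Set

namespace AddMonoidAlgebra

variable {k A : Type*} [Semiring k]

theorem ideal_span_of'_image_Ioi [AddMonoid A] [Preorder A] (a : A) :
    Ideal.span (of' k A '' Ioi a) = ⨆ b : Ioi a, Ideal.span (of' k A '' Ici (b : A)) := by
  have hIoi : Ioi a = ⋃ b : Ioi a, Ici (b : A) :=
    Subset.antisymm (fun c hc => mem_iUnion.2 ⟨⟨c, hc⟩, self_mem_Ici⟩)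
      (iUnion_subset fun b => Ici_subset_Ioi.2 b.2)
  rw [← Ideal.span_iUnion, ← image_iUnion, ← hIoi]

section CanonicallyOrdered

variable [AddCommMonoid A] [PartialOrder A] [CanonicallyOrderedAdd A]

theorem mem_ideal_span_of'_image_iff_of_isUpperSet {s : Set A} (hs : IsUpperSet s)
    {x : AddMonoidAlgebra k A} :
    x ∈ Ideal.span (of' k A '' s) ↔ ↑x.coeff.support ⊆ s := by
  rw [mem_ideal_span_of'_image]
  refine forall₂_congr fun m _ => ⟨?_, fun hm => ⟨m, hm, 0, (zero_add m).symm⟩⟩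
  rintro ⟨m', hm', d, rfl⟩
  exact hs le_add_self hm'

theorem single_one_mem_ideal_span_of'_image_iff [Nontrivial k] {s : Set A} (hs : IsUpperSet s)
    {a : A} : single a (1 : k) ∈ Ideal.span (of' k A '' s) ↔ a ∈ s := by
  rw [mem_ideal_span_of'_image_iff_of_isUpperSet hs, coeff_single,
    Finsupp.support_single _ one_ne_zero, Finset.coe_singleton, singleton_subset_iff]

end CanonicallyOrdered

theorem not_fg_ideal_span_of'_image_Ioi [AddCommMonoid A] [LinearOrder A]
    [CanonicallyOrderedAdd A] [DenselyOrdered A] [NoMaxOrder A] [Nontrivial k] (a : A) :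
    ¬ (Ideal.span (of' k A '' Ioi a)).FG := by
  set J : Ioi a → Ideal k[A] := fun b => Ideal.span (of' k A '' Ici (b : A))
  have hJ_lt : ∀ b, J b < Ideal.span (of' k A '' Ioi a) := by
    intro ⟨b, hb⟩
    obtain ⟨c, hac, hcb⟩ := exists_between hb
    refine SetLike.lt_iff_le_and_exists.2
      ⟨Ideal.span_mono (image_mono (Ici_subset_Ioi.2 hb)), single c 1, ?_, ?_⟩
    · exact (single_one_mem_ideal_span_of'_image_iff (isUpperSet_Ioi a)).2 hac
    · exact fun h => hcb.not_ge ((single_one_mem_ideal_span_of'_image_iff (isUpperSet_Ici b)).1 h)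
  have hJ_directed : Directed (· ≤ ·) J :=
    Antitone.directed_le fun b c hbc => Ideal.span_mono (image_mono (Ici_subset_Ici.2 hbc))
  intro hfg
  have := CompleteLattice.IsCompactElement.directed_sSup_lt_of_lt
    ((Submodule.fg_iff_compact _).1 hfg) (range_nonempty J)
    (directedOn_range.2 hJ_directed) (forall_mem_range.2 hJ_lt)
  rw [sSup_range, ← ideal_span_of'_image_Ioi] at this
  exact this.false

end AddMonoidAlgebra

theorem augmentationIdeal_eq_span_of'_image_Ioi (κ : Type) [Field κ] :
    augmentationIdeal κ = Ideal.span (AddMonoidAlgebra.of' κ ℝ≥0 '' Ioi 0) := by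
  simp only [augmentationIdeal, AddMonoidAlgebra.of'_apply]
  congr 1
  ext x
  simp [eq_comm]

/-- The ideal of `κ[ℝ₊]` generated by the monomials `T^t`, `t > 0`, is not finitely
generated; in particular `κ[ℝ₊]` is not a Noetherian ring. -/
theorem augmentationIdeal_not_fg_and_not_noetherian (κ : Type) [Field κ] :
    ¬ (augmentationIdeal κ).FG ∧ ¬ IsNoetherianRing (PersRing κ) := by
  have hfg : ¬ (augmentationIdeal κ).FG := by
    rw [augmentationIdeal_eq_span_of'_image_Ioi]
    exact AddMonoidAlgebra.not_fg_ideal_span_of'_image_Ioi 0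
  exact ⟨hfg, fun _ => hfg (IsNoetherian.noetherian _)⟩

end
end

section
/- Let (X, d_X) and (Y, d_Y) be metric spaces whose underlying sets are bounded, with diameters diam(X) and diam(Y) (the diameter of the universal set). Let n be a natural number and let x : Fin (n+1) → X and y : Fin (n+1) → Y be tuples of points. Then l_X(x) + l_Y(y) ≤ l_{X×Y}(x, y) + min(diam(X), diam(Y)), where l_{X×Y}(x, y) = max over all pairs (i, j) of (d_X(x i, x j) + d_Y(y i, y j)). -/
noncomputable section

/-- The max-length `l_X(x)` of a tuple `x : Fin (n+1) → X` of points in a metric space: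
the maximum of the pairwise distances `d_X(x i, x j)` over all pairs `(i, j)`. -/
def maxLength {X : Type} [MetricSpace X] {n : ℕ} (x : Fin (n + 1) → X) : ℝ :=
  Finset.univ.sup' Finset.univ_nonempty
    (fun p : Fin (n + 1) × Fin (n + 1) => dist (x p.1) (x p.2))

/-- The max-length of the tuple `i ↦ (x i, y i)` in the product `X × Y` equipped with the
sum metric `d_{X×Y} = d_X + d_Y`: the maximum over all pairs `(i, j)` of
`d_X(x i, x j) + d_Y(y i, y j)`. -/
def sumMaxLength {X Y : Type} [MetricSpace X] [MetricSpace Y] {n : ℕ}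
    (x : Fin (n + 1) → X) (y : Fin (n + 1) → Y) : ℝ :=
  Finset.univ.sup' Finset.univ_nonempty
    (fun p : Fin (n + 1) × Fin (n + 1) => dist (x p.1) (x p.2) + dist (y p.1) (y p.2))

/-- **Chain-level estimate in the proof of the interleaving bound (Theorem 4.8).**
If `X` and `Y` are bounded metric spaces, then for all tuples `x : Fin (n+1) → X` and
`y : Fin (n+1) → Y` one has `l_X(x) + l_Y(y) ≤ l_{X×Y}(x, y) + min(diam X, diam Y)`. -/
theorem maxLength_add_maxLength_le_sumMaxLength_add_min_diam
    {X Y : Type} [MetricSpace X] [MetricSpace Y]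
    (hX : Bornology.IsBounded (Set.univ : Set X))
    (hY : Bornology.IsBounded (Set.univ : Set Y))
    {n : ℕ} (x : Fin (n + 1) → X) (y : Fin (n + 1) → Y) :
    maxLength x + maxLength y ≤
      sumMaxLength x y +
        min (Metric.diam (Set.univ : Set X)) (Metric.diam (Set.univ : Set Y)) := by
  have hx : maxLength x ≤ sumMaxLength x y := by
    apply Finset.sup'_le
    intro p _
    refine le_trans ?_ (Finset.le_sup' _ (Finset.mem_univ p))
    simpa using dist_nonneg
  have hy : maxLength y ≤ sumMaxLength x y := by
    apply Finset.sup'_le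
    intro p _
    refine le_trans ?_ (Finset.le_sup' _ (Finset.mem_univ p))
    simpa using dist_nonneg
  have hxd : maxLength x ≤ Metric.diam (Set.univ : Set X) := by
    apply Finset.sup'_le
    intro p _
    exact Metric.dist_le_diam_of_mem hX (Set.mem_univ _) (Set.mem_univ _)
  have hyd : maxLength y ≤ Metric.diam (Set.univ : Set Y) := by
    apply Finset.sup'_le
    intro p _
    exact Metric.dist_le_diam_of_mem hY (Set.mem_univ _) (Set.mem_univ _)
  rcases le_total (Metric.diam (Set.univ : Set X)) (Metric.diam (Set.univ : Set Y)) with h | h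
  · rw [min_eq_left h]
    linarith
  · rw [min_eq_right h]
    linarith

end
end
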